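/- arXiv:1810.05876 — 4 statements merged into one kernel-verified Lean document; each statement's English description precedes it below -/
import Mathlib

section
/- Let n ≥ 1 and fix 1 ≤ j ≤ n. Then for every real x, ℓ̊_j(x) = Σ_{k=1}^{n} λ_{jk} · x(1−x) · P_{k−1}^{(1,1)}(2x−1), where λ_{jk} := [(2k+1)(k+1)/k] · [ŵ_j/(ξ̂_j(1−ξ̂_j))] · P_{k−1}^{(1,1)}(2ξ̂_j−1). -/
/-!
The shifted Jacobi polynomials `J_m(x) = P_m^{(1,1)}(2x - 1)` are orthogonal for the weight
`x(1 - x)` on `[0, 1]`, with `∫ x(1 - x) J_m² = (m + 1)/((2m + 3)(m + 2))`. Since the nodes `ξ̂_i`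
are the roots of `J_n`, the quadrature rule with weights `ŵ_i` is exact in degree `< 2n`, so
`∫ x(1 - x) ℓ_j J_k = ŵ_j J_k(ξ̂_j)` for `k < n`. Expanding `ℓ_j`, of degree `n - 1`, in the
orthogonal basis `J_0, …, J_{n-1}` gives `ℓ_j = ∑_k ŵ_j J_k(ξ̂_j) J_k / ∫ x(1 - x) J_k²`, and
multiplying by `x(1 - x)/(ξ̂_j(1 - ξ̂_j))` gives the claim.

Orthogonality reduces, after expanding `J_m` in the monomials `(x - 1)^k x^(m-k)`, to Beta
integrals and to the vanishing of the `m`-th finite difference of `k ↦ C(k, j)` for `j < m`.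
-/

open Real MeasureTheory intervalIntegral Finset

/-- Jacobi polynomial `P_n^{(a,b)}(τ)` for natural index `n` (general real parameters). -/
noncomputable def jacobiPNat (n : ℕ) (a b τ : ℝ) : ℝ :=
  (1 / 2 ^ n) * ∑ k ∈ Finset.range (n + 1),
    (Real.Gamma ((n : ℝ) + a + 1) / (Real.Gamma ((k : ℝ) + a + 1) * (Nat.factorial (n - k) : ℝ))) *
    (Real.Gamma ((n : ℝ) + b + 1) / (Real.Gamma (((n - k : ℕ) : ℝ) + b + 1) * (Nat.factorial k : ℝ))) *
    (τ - 1) ^ k * (τ + 1) ^ (n - k)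

/-- Jacobi polynomial with integer index, with the convention `P_{-1}^{(a,b)} = 0`. -/
noncomputable def jacobiP (m : ℤ) (a b τ : ℝ) : ℝ :=
  if 0 ≤ m then jacobiPNat m.toNat a b τ else 0

/-- Left Riemann--Liouville fractional derivative of order `α` (for `1 < α < 2`):
`(₀D_x^α g)(x) = (1/Γ(2−α)) (d²/dx²) ∫_0^x (x−s)^{1−α} g(s) ds`. -/
noncomputable def leftRL (α : ℝ) (g : ℝ → ℝ) (x : ℝ) : ℝ :=
  (1 / Real.Gamma (2 - α)) *
    deriv (deriv (fun t : ℝ => ∫ s in (0:ℝ)..t, (t - s) ^ (1 - α) * g s)) x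

/-- Right Riemann--Liouville fractional derivative of order `α` (for `1 < α < 2`):
`(ₓD_1^α g)(x) = (1/Γ(2−α)) (d²/dx²) ∫_x^1 (s−x)^{1−α} g(s) ds`. -/
noncomputable def rightRL (α : ℝ) (g : ℝ → ℝ) (x : ℝ) : ℝ :=
  (1 / Real.Gamma (2 - α)) *
    deriv (deriv (fun t : ℝ => ∫ s in t..(1:ℝ), (s - t) ^ (1 - α) * g s)) x

/-- The function `ζ_k` appearing in the fractional differentiation matrices. -/
noncomputable def zeta (β : ℝ) (k : ℕ) (x : ℝ) : ℝ :=
  Real.Gamma ((k : ℝ) + 1) / Real.Gamma ((k : ℝ) - 1 + β) * x ^ (β - 1) *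
      jacobiP ((k : ℤ) - 1) (3 - β) (β - 1) (2 * x - 1)
    - Real.Gamma ((k : ℝ) + 2) / Real.Gamma ((k : ℝ) + β) * (((k : ℝ) + 2) / (2 * (k : ℝ) + 1)) *
        x ^ β * jacobiP ((k : ℤ) - 1) (3 - β) β (2 * x - 1)
    - Real.Gamma ((k : ℝ) + 1) / Real.Gamma ((k : ℝ) - 1 + β) * ((k : ℝ) / (2 * (k : ℝ) + 1)) *
        x ^ β * jacobiP ((k : ℤ) - 2) (3 - β) β (2 * x - 1)

open Polynomial
open scoped Nat

section OrthogonalPolynomials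

variable {F : Type*} [Field F]

structure IsOrthogonalSequence (I : F[X] →ₗ[F] F) (J : ℕ → F[X]) : Prop where
  degree_eq : ∀ i, (J i).degree = i
  orthogonal : ∀ m, ∀ q ∈ degreeLT F m, I (q * J m) = 0
  apply_mul_self_ne_zero : ∀ i, I (J i * J i) ≠ 0

variable (I : F[X] →ₗ[F] F) {J : ℕ → F[X]}

theorem apply_mul_eq_leadingCoeff_mul
    (horth : ∀ m, ∀ q ∈ degreeLT F m, I (q * J m) = 0) {r : F[X]} {d : ℕ} (hd : r.natDegree = d) :
    I (r * J d) = r.leadingCoeff * I (X ^ d * J d) := by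
  rcases eq_or_ne r 0 with rfl | hr0
  · simp
  have hlow : r.eraseLead ∈ degreeLT F d := by
    rw [mem_degreeLT, ← hd, ← degree_eq_natDegree hr0]
    exact degree_eraseLead_lt hr0
  have hsplit := eraseLead_add_C_mul_X_pow r
  rw [hd] at hsplit
  conv_lhs => rw [← hsplit]
  rw [add_mul, map_add, horth _ _ hlow, zero_add, mul_assoc, ← smul_eq_C_mul, map_smul,
    smul_eq_mul]

theorem gauss_quadrature {ι : Type*} [DecidableEq ι] {s : Finset ι} {v : ι → F}
    (hvs : Set.InjOn v s) (hnodal : ∀ q ∈ degreeLT F #s, I (q * Lagrange.nodal s v) = 0)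
    {p : F[X]} (hp : p ∈ degreeLT F (2 * #s)) :
    I p = ∑ i ∈ s, I (Lagrange.basis s v i) * p.eval (v i) := by
  set ω := Lagrange.nodal s v
  have hω : ω.Monic := Lagrange.nodal_monic
  -- in `p = p %ₘ ω + ω * (p /ₘ ω)` the second term is killed by `I`, the first is interpolated
  -- exactly at the nodes
  have hquot : p /ₘ ω ∈ degreeLT F #s := by
    rw [mem_degreeLT]
    by_cases h : ω.degree ≤ p.degree
    · have hsum := degree_add_divByMonic hω h
      rw [Lagrange.degree_nodal] at hsum
      have hlt : (#s : WithBot ℕ) + (p /ₘ ω).degree < #s + #s := by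
        rw [hsum]; exact_mod_cast (two_mul #s) ▸ mem_degreeLT.1 hp
      exact (WithBot.add_lt_add_iff_left WithBot.coe_ne_bot).1 hlt
    · rw [(divByMonic_eq_zero_iff hω).2 (not_le.1 h), degree_zero]
      exact WithBot.bot_lt_coe _
  have hrem : p %ₘ ω = Lagrange.interpolate s v fun i => p.eval (v i) := by
    refine Lagrange.eq_interpolate_of_eval_eq _ hvs ?_ fun i hi => ?_
    · rw [← Lagrange.degree_nodal (v := v)]
      exact degree_modByMonic_lt p hω
    · have := congrArg (eval (v i)) (modByMonic_add_div p ω)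
      rwa [eval_add, eval_mul, Lagrange.eval_nodal_at_node hi, zero_mul, add_zero] at this
  conv_lhs => rw [← modByMonic_add_div p ω]
  rw [map_add, mul_comm, hnodal _ hquot, add_zero, hrem, Lagrange.interpolate_apply, map_sum]
  refine sum_congr rfl fun i _ => ?_
  rw [← smul_eq_C_mul, map_smul, smul_eq_mul, mul_comm]

theorem eq_C_leadingCoeff_mul_nodal {ι : Type*} {s : Finset ι} {v : ι → F}
    (hvs : Set.InjOn v s) {p : F[X]} (hdeg : p.degree = #s) (hroot : ∀ i ∈ s, p.eval (v i) = 0) :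
    p = C p.leadingCoeff * Lagrange.nodal s v := by
  have hp0 : p.leadingCoeff ≠ 0 := leadingCoeff_ne_zero.2 fun h => by simp [h] at hdeg
  refine eq_of_degree_le_of_eval_index_eq s hvs hdeg.le ?_ ?_ fun i hi => ?_
  · rw [degree_C_mul hp0, Lagrange.degree_nodal, hdeg]
  · rw [leadingCoeff_C_mul_of_isUnit hp0.isUnit, Lagrange.nodal_monic.leadingCoeff, mul_one]
  · rw [hroot i hi, eval_mul, Lagrange.eval_nodal_at_node hi, mul_zero]

namespace IsOrthogonalSequence

variable {I}

theorem apply_mul_eq_zero_of_ne (hJ : IsOrthogonalSequence I J) {a b : ℕ} (hab : a ≠ b) :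
    I (J a * J b) = 0 := by
  rcases hab.lt_or_gt with h | h
  · exact hJ.orthogonal b _ (mem_degreeLT.2 (by rw [hJ.degree_eq]; exact_mod_cast h))
  · rw [mul_comm]
    exact hJ.orthogonal a _ (mem_degreeLT.2 (by rw [hJ.degree_eq]; exact_mod_cast h))

theorem eq_zero_of_forall_apply_mul_eq_zero (hJ : IsOrthogonalSequence I J) {n : ℕ} {r : F[X]}
    (hr : r ∈ degreeLT F n) (hperp : ∀ i < n, I (r * J i) = 0) : r = 0 := by
  by_contra hr0
  set d := r.natDegree
  have hd : d < n := by exact_mod_cast degree_eq_natDegree hr0 ▸ mem_degreeLT.1 hr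
  have hnorm := hJ.apply_mul_self_ne_zero d
  rw [apply_mul_eq_leadingCoeff_mul I hJ.orthogonal
    (natDegree_eq_of_degree_eq_some (hJ.degree_eq d))] at hnorm
  have hr := apply_mul_eq_leadingCoeff_mul I hJ.orthogonal (r := r) rfl
  rw [hperp d hd, eq_comm, mul_eq_zero] at hr
  exact hr.elim (leadingCoeff_ne_zero.2 hr0) (right_ne_zero_of_mul hnorm)

theorem eq_sum (hJ : IsOrthogonalSequence I J) {n : ℕ} {p : F[X]} (hp : p ∈ degreeLT F n) :
    p = ∑ i ∈ range n, (I (p * J i) / I (J i * J i)) • J i := by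
  rw [← sub_eq_zero]
  refine hJ.eq_zero_of_forall_apply_mul_eq_zero (n := n) ?_ fun t ht => ?_
  · refine Submodule.sub_mem _ hp (Submodule.sum_mem _ fun i hi => Submodule.smul_mem _ _ ?_)
    rw [mem_degreeLT, hJ.degree_eq]
    exact_mod_cast mem_range.1 hi
  · rw [sub_mul, map_sub, sum_mul, map_sum, sum_eq_single_of_mem t (mem_range.2 ht)]
    · rw [smul_mul_assoc, map_smul, smul_eq_mul, div_mul_cancel₀ _ (hJ.apply_mul_self_ne_zero t),
        sub_self]
    · intro i _ hit
      rw [smul_mul_assoc, map_smul, hJ.apply_mul_eq_zero_of_ne hit, smul_zero]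

theorem basis_eq_sum (hJ : IsOrthogonalSequence I J) {ι : Type*}
    [DecidableEq ι] {s : Finset ι} {v : ι → F} (hvs : Set.InjOn v s)
    (hroot : ∀ i ∈ s, (J #s).eval (v i) = 0) {j : ι} (hj : j ∈ s) :
    Lagrange.basis s v j = ∑ k ∈ range #s,
      (I (Lagrange.basis s v j) * (J k).eval (v j) / I (J k * J k)) • J k := by
  have hs : 0 < #s := card_pos.2 ⟨j, hj⟩
  have hbasis : (Lagrange.basis s v j).degree = ↑(#s - 1) := Lagrange.degree_basis hvs hj
  have hJs := eq_C_leadingCoeff_mul_nodal hvs (hJ.degree_eq #s) hroot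
  set c := (J #s).leadingCoeff
  have hc : c ≠ 0 := leadingCoeff_ne_zero.2 fun h => by simpa [h] using hJ.degree_eq #s
  have hnodal : ∀ q ∈ degreeLT F #s, I (q * Lagrange.nodal s v) = 0 := by
    intro q hq
    have hq' : q * Lagrange.nodal s v = (c⁻¹ • q) * J #s := by
      rw [hJs, smul_eq_C_mul, mul_mul_mul_comm, ← C_mul, inv_mul_cancel₀ hc, C_1, one_mul]
    rw [hq']
    exact hJ.orthogonal _ _ (Submodule.smul_mem _ _ hq)
  conv_lhs => rw [hJ.eq_sum (n := #s) (p := Lagrange.basis s v j)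
    (mem_degreeLT.2 (by rw [hbasis]; exact_mod_cast Nat.sub_lt hs one_pos))]
  refine sum_congr rfl fun k hk => ?_
  have hprod : Lagrange.basis s v j * J k ∈ degreeLT F (2 * #s) := by
    rw [mem_degreeLT, degree_mul, hbasis, hJ.degree_eq]
    exact_mod_cast (by have := mem_range.1 hk; omega : #s - 1 + k < 2 * #s)
  rw [gauss_quadrature I hvs hnodal hprod, sum_eq_single_of_mem j hj]
  · rw [eval_mul, Lagrange.eval_basis_self hvs hj, one_mul]
  · intro i hi hij
    rw [eval_mul, Lagrange.eval_basis_of_ne hij.symm hi, zero_mul, mul_zero]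

end IsOrthogonalSequence

end OrthogonalPolynomials

theorem integral_pow_mul_one_sub_pow (a b : ℕ) :
    ∫ x in (0:ℝ)..1, x ^ a * (1 - x) ^ b = (a ! * b ! : ℝ) / (a + b + 1)! := by
  induction b generalizing a with
  | zero =>
    rw [integral_congr (g := fun x : ℝ => x ^ a) fun x _ => by simp, integral_pow,
      Nat.factorial_succ]
    push_cast
    field_simp
    simp
  | succ b ih =>
    -- integration by parts against `x ^ (a + 1) * (1 - x) ^ (b + 1)`, which vanishes at `0` and `1`
    have hderiv : ∀ x ∈ Set.uIcc (0:ℝ) 1, HasDerivAt (fun y => y ^ (a + 1) * (1 - y) ^ (b + 1))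
        ((a + 1) * (x ^ a * (1 - x) ^ (b + 1)) - (b + 1) * (x ^ (a + 1) * (1 - x) ^ b)) x := by
      intro x _
      have h2 := ((hasDerivAt_id x).const_sub 1).fun_pow (b + 1)
      refine ((hasDerivAt_pow (a + 1) x).fun_mul h2).congr_deriv ?_
      push_cast [id]
      ring
    have hibp := integral_eq_sub_of_hasDerivAt hderiv
      (by apply Continuous.intervalIntegrable; fun_prop)
    rw [intervalIntegral.integral_sub (by apply Continuous.intervalIntegrable; fun_prop)
      (by apply Continuous.intervalIntegrable; fun_prop), intervalIntegral.integral_const_mul,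
      intervalIntegral.integral_const_mul, ih] at hibp
    simp only [one_pow, zero_pow (Nat.succ_ne_zero _), sub_self, mul_zero, sub_zero,
      zero_mul] at hibp
    rw [show a + 1 + b + 1 = a + (b + 1) + 1 by ring, Nat.factorial_succ a, sub_eq_zero] at hibp
    rw [Nat.factorial_succ b, eq_div_iff (by positivity)]
    have ha : (a : ℝ) + 1 ≠ 0 := by positivity
    push_cast at hibp ⊢
    rw [mul_div_assoc', eq_div_iff (by positivity)] at hibp
    apply mul_left_cancel₀ ha
    linear_combination hibp

theorem fwdDiff_iter_choose_of_le {j m : ℕ} (hjm : j ≤ m) :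
    (fwdDiff 1)^[m] (fun x : ℕ => (x.choose j : ℤ)) = fun _ => if j = m then 1 else 0 := by
  obtain ⟨r, rfl⟩ := Nat.exists_eq_add_of_le hjm
  have hj : (fwdDiff 1)^[j] (fun x : ℕ => (x.choose j : ℤ)) = fun _ => 1 := by
    simpa using fwdDiff_iter_choose 0 j
  rw [add_comm, Function.iterate_add_apply, hj]
  rcases r with _ | r
  · simp
  · rw [Function.iterate_succ_apply, fwdDiff_const]
    simp [Function.iterate_fixed (fwdDiff_const (1 : ℕ) (0 : ℤ))]

theorem sum_range_neg_one_pow_mul_choose_mul_choose {j m : ℕ} (hjm : j ≤ m) (y : ℕ) :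
    ∑ k ∈ range (m + 1), (-1 : ℤ) ^ k * m.choose k * (y + m - k).choose j =
      if j = m then 1 else 0 := by
  have h := fwdDiff_iter_eq_sum_shift 1 (fun x : ℕ => (x.choose j : ℤ)) m y
  rw [fwdDiff_iter_choose_of_le hjm, ← sum_range_reflect] at h
  refine (sum_congr rfl fun k hk => ?_).trans h.symm
  have hk : k ≤ m := Nat.lt_succ_iff.1 (mem_range.1 hk)
  rw [smul_eq_mul, show m + 1 - 1 - k = m - k by omega, Nat.sub_sub_self hk,
    Nat.choose_symm hk, smul_eq_mul, mul_one, Nat.add_sub_assoc hk]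

theorem choose_mul_choose_mul_beta {m k : ℕ} (hk : k ≤ m) (j : ℕ) :
    ((m + 1).choose (k + 1) * (m + 1).choose k : ℝ) * ((j + 1 + m - k)! * (k + 1)! / (m + j + 3)!) =
      (m + 1)! * (m + 1) * j ! / (m + j + 3)! * (m.choose k * (j + 1 + m - k).choose j) := by
  rw [Nat.cast_choose ℝ (by omega : k + 1 ≤ m + 1), Nat.cast_choose ℝ (by omega : k ≤ m + 1),
    Nat.cast_choose ℝ hk, Nat.cast_choose ℝ (by omega : j ≤ j + 1 + m - k),
    show m + 1 - (k + 1) = m - k by omega, show j + 1 + m - k - j = m - k + 1 by omega,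
    show m + 1 - k = m - k + 1 by omega, Nat.factorial_succ (m - k), Nat.factorial_succ m]
  field_simp
  push_cast [Nat.cast_sub hk]
  ring

theorem monic_X_sub_one_pow_mul_X_pow {R : Type*} [CommRing R] (k l : ℕ) :
    ((X - 1) ^ k * X ^ l : R[X]).Monic := by
  simpa using ((monic_X_sub_C (1 : R)).pow k).mul (monic_X_pow l)

theorem natDegree_X_sub_one_pow_mul_X_pow {R : Type*} [CommRing R] [Nontrivial R] (k l : ℕ) :
    ((X - 1) ^ k * X ^ l : R[X]).natDegree = k + l := by
  rw [← C_1, ((monic_X_sub_C (1 : R)).pow k).natDegree_mul (monic_X_pow l),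
    (monic_X_sub_C (1 : R)).natDegree_pow, natDegree_X_pow, natDegree_X_sub_C, mul_one]

theorem coeff_X_sub_one_pow_mul_X_pow {R : Type*} [CommRing R] [Nontrivial R] {k m : ℕ}
    (hk : k ≤ m) : ((X - 1) ^ k * X ^ (m - k) : R[X]).coeff m = 1 := by
  have h := (monic_X_sub_one_pow_mul_X_pow (R := R) k (m - k)).coeff_natDegree
  rwa [natDegree_X_sub_one_pow_mul_X_pow, Nat.add_sub_cancel' hk] at h

-- `x ↦ P_m^{(1,1)}(2x - 1)` (see `eval_shiftedJacobi`)
noncomputable def shiftedJacobi (m : ℕ) : ℝ[X] :=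
  ∑ k ∈ range (m + 1), ((m + 1).choose (k + 1) * (m + 1).choose k : ℝ) • ((X - 1) ^ k * X ^ (m - k))

theorem coeff_shiftedJacobi_self (m : ℕ) : (shiftedJacobi m).coeff m = (2 * m + 2).choose m := by
  rw [shiftedJacobi, finsetSum_coeff, sum_congr rfl fun k hk => by
    rw [coeff_smul, smul_eq_mul, coeff_X_sub_one_pow_mul_X_pow (Nat.lt_succ_iff.1 (mem_range.1 hk)),
      mul_one]]
  rw [show 2 * m + 2 = (m + 1) + (m + 1) by ring, Nat.add_choose_eq,
    Nat.sum_antidiagonal_eq_sum_range_succ fun i j => (m + 1).choose i * (m + 1).choose j]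
  push_cast
  refine sum_congr rfl fun k hk => ?_
  have hk : m + 1 = k + 1 + (m - k) := by have := mem_range.1 hk; omega
  rw [mul_comm, Nat.choose_symm_of_eq_add hk]

theorem degree_shiftedJacobi (m : ℕ) : (shiftedJacobi m).degree = m := by
  refine degree_eq_of_le_of_coeff_ne_zero ?_ ?_
  · refine (degree_sum_le _ _).trans (Finset.sup_le fun k hk => ?_)
    refine (degree_smul_le _ _).trans (degree_le_of_natDegree_le ?_)
    rw [natDegree_X_sub_one_pow_mul_X_pow]
    have := mem_range.1 hk
    omega
  · rw [coeff_shiftedJacobi_self]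
    exact_mod_cast (Nat.choose_pos (by omega)).ne'

theorem leadingCoeff_shiftedJacobi (m : ℕ) :
    (shiftedJacobi m).leadingCoeff = (2 * m + 2).choose m := by
  rw [leadingCoeff, natDegree_eq_of_degree_eq_some (degree_shiftedJacobi m),
    coeff_shiftedJacobi_self]

theorem Real.Gamma_nat_add_one_add_one (k : ℕ) : Real.Gamma ((k : ℝ) + 1 + 1) = (k + 1)! := by
  exact_mod_cast Real.Gamma_nat_eq_factorial (k + 1)

theorem eval_shiftedJacobi (m : ℕ) (x : ℝ) :
    (shiftedJacobi m).eval x = jacobiPNat m 1 1 (2 * x - 1) := by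
  rw [shiftedJacobi, jacobiPNat, eval_finsetSum, mul_sum]
  refine sum_congr rfl fun k hk => ?_
  have hk : k ≤ m := Nat.lt_succ_iff.1 (mem_range.1 hk)
  have hc₁ : ((m + 1).choose (k + 1) : ℝ) = (m + 1)! / ((k + 1)! * (m - k)!) := by
    rw [Nat.cast_choose ℝ (by omega), Nat.add_sub_add_right]
  have hc₂ : ((m + 1).choose k : ℝ) = (m + 1)! / ((m - k + 1)! * k !) := by
    rw [Nat.cast_choose ℝ (by omega), mul_comm, Nat.sub_add_comm hk]
  have h2 : (2 * x - 1 - 1) ^ k * (2 * x - 1 + 1) ^ (m - k) =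
      2 ^ m * ((x - 1) ^ k * x ^ (m - k)) := by
    rw [show 2 * x - 1 - 1 = 2 * (x - 1) by ring, show 2 * x - 1 + 1 = 2 * x by ring, mul_pow,
      mul_pow, ← Nat.add_sub_cancel' hk, pow_add, Nat.add_sub_cancel_left]
    ring
  simp only [eval_smul, eval_mul, eval_pow, eval_sub, eval_X, eval_one, smul_eq_mul,
    Real.Gamma_nat_add_one_add_one, ← hc₁, ← hc₂, mul_assoc, h2]
  field_simp

noncomputable def jacobiWeightIntegral : ℝ[X] →ₗ[ℝ] ℝ where
  toFun p := ∫ x in (0:ℝ)..1, x * (1 - x) * p.eval x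
  map_add' p q := by
    simp only [eval_add, mul_add]
    exact intervalIntegral.integral_add (by apply Continuous.intervalIntegrable; fun_prop)
      (by apply Continuous.intervalIntegrable; fun_prop)
  map_smul' c p := by
    simp only [eval_smul, smul_eq_mul, RingHom.id_apply, ← intervalIntegral.integral_const_mul]
    congr 1 with x
    ring

theorem jacobiWeightIntegral_apply (p : ℝ[X]) :
    jacobiWeightIntegral p = ∫ x in (0:ℝ)..1, x * (1 - x) * p.eval x := rfl

theorem jacobiWeightIntegral_X_pow_mul_shiftedJacobi {j m : ℕ} (hjm : j ≤ m) :
    jacobiWeightIntegral (X ^ j * shiftedJacobi m) =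
      if j = m then ((m + 1)! : ℝ) ^ 2 / (2 * m + 3)! else 0 := by
  have hterm : ∀ x : ℝ, x * (1 - x) * (X ^ j * shiftedJacobi m).eval x =
      ∑ k ∈ range (m + 1), ((m + 1).choose (k + 1) * (m + 1).choose k : ℝ) *
        ((-1) ^ k * (x ^ (j + 1 + m - k) * (1 - x) ^ (k + 1))) := by
    intro x
    simp only [shiftedJacobi, eval_mul, eval_pow, eval_X, eval_finsetSum, eval_smul, eval_sub,
      eval_one, smul_eq_mul, mul_sum]
    refine sum_congr rfl fun k hk => ?_
    have hk : k ≤ m := Nat.lt_succ_iff.1 (mem_range.1 hk)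
    rw [show j + 1 + m - k = 1 + j + (m - k) by omega, pow_add, pow_add,
      show x - 1 = -1 * (1 - x) by ring, mul_pow]
    ring
  rw [jacobiWeightIntegral_apply, integral_congr fun x _ => hterm x,
    intervalIntegral.integral_finsetSum fun k _ => by
      apply Continuous.intervalIntegrable; fun_prop]
  have hsum := sum_range_neg_one_pow_mul_choose_mul_choose hjm (j + 1)
  have hsumℝ : ∑ k ∈ range (m + 1), (-1 : ℝ) ^ k * (m.choose k * (j + 1 + m - k).choose j) =
      if j = m then 1 else 0 := by
    have := congrArg (Int.cast : ℤ → ℝ) hsum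
    push_cast [mul_assoc] at this
    exact this
  rw [sum_congr rfl fun k hk => by
      rw [intervalIntegral.integral_const_mul, intervalIntegral.integral_const_mul,
        integral_pow_mul_one_sub_pow, show j + 1 + m - k + (k + 1) + 1 = m + j + 3 by
          have := mem_range.1 hk; omega, mul_left_comm,
        choose_mul_choose_mul_beta (Nat.lt_succ_iff.1 (mem_range.1 hk)), mul_left_comm],
    ← mul_sum, hsumℝ]
  split_ifs with h
  · subst h
    rw [show j + j + 3 = 2 * j + 3 by ring, Nat.factorial_succ j]
    push_cast
    ring
  · rw [mul_zero]

theorem jacobiWeightIntegral_mul_shiftedJacobi {m : ℕ} {q : ℝ[X]} (hq : q ∈ degreeLT ℝ m) :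
    jacobiWeightIntegral (q * shiftedJacobi m) = 0 := by
  rw [degreeLT_eq_span_X_pow] at hq
  induction hq using Submodule.span_induction with
  | mem p hp =>
    obtain ⟨j, hj, rfl⟩ := mem_image.1 hp
    have hj := mem_range.1 hj
    rw [jacobiWeightIntegral_X_pow_mul_shiftedJacobi hj.le, if_neg hj.ne]
  | zero => rw [zero_mul, map_zero]
  | add p r _ _ hp hr => rw [add_mul, map_add, hp, hr, add_zero]
  | smul c p _ hp => rw [smul_mul_assoc, map_smul, hp, smul_zero]

theorem jacobiWeightIntegral_shiftedJacobi_mul_self (m : ℕ) :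
    jacobiWeightIntegral (shiftedJacobi m * shiftedJacobi m) =
      (m + 1) / ((2 * m + 3) * (m + 2)) := by
  rw [apply_mul_eq_leadingCoeff_mul _ (fun _ _ => jacobiWeightIntegral_mul_shiftedJacobi)
      (natDegree_eq_of_degree_eq_some (degree_shiftedJacobi m)),
    jacobiWeightIntegral_X_pow_mul_shiftedJacobi le_rfl, if_pos rfl, leadingCoeff_shiftedJacobi,
    Nat.cast_choose ℝ (by omega), show 2 * m + 2 - m = m + 2 by omega,
    show 2 * m + 3 = 2 * m + 2 + 1 by ring, Nat.factorial_succ (2 * m + 2),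
    show m + 2 = m + 1 + 1 by ring, Nat.factorial_succ (m + 1), Nat.factorial_succ m]
  push_cast
  field_simp
  ring

theorem isOrthogonalSequence_shiftedJacobi :
    IsOrthogonalSequence jacobiWeightIntegral shiftedJacobi where
  degree_eq := degree_shiftedJacobi
  orthogonal _ _ := jacobiWeightIntegral_mul_shiftedJacobi
  apply_mul_self_ne_zero m := by
    rw [jacobiWeightIntegral_shiftedJacobi_mul_self]
    positivity

theorem jacobiP_natCast (k : ℕ) (a b τ : ℝ) : jacobiP k a b τ = jacobiPNat k a b τ := by
  simp [jacobiP]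

theorem modified_basis_expansion_general (n : ℕ) (ξ : Fin n → ℝ)
    (hξinj : Function.Injective ξ)
    (hξroot : ∀ i, jacobiPNat n 1 1 (ξ i) = 0)
    (ξh : Fin n → ℝ) (hξh : ∀ i, ξh i = (ξ i + 1) / 2)
    (ℓ : Fin n → ℝ → ℝ)
    (hℓ : ∀ j x, ℓ j x = ∏ k ∈ Finset.univ.erase j, (x - ξh k) / (ξh j - ξh k))
    (ℓm : Fin n → ℝ → ℝ)
    (hℓm : ∀ j x, ℓm j x = (x * (1 - x) / (ξh j * (1 - ξh j))) * ℓ j x)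
    (w : Fin n → ℝ) (hw : ∀ j, w j = ∫ x in (0:ℝ)..1, x * (1 - x) * ℓ j x)
    (j : Fin n) (x : ℝ) :
    ℓm j x = ∑ k ∈ Finset.Icc 1 n,
      ((2 * (k : ℝ) + 1) * ((k : ℝ) + 1) / (k : ℝ)) * (w j / (ξh j * (1 - ξh j))) *
        jacobiP ((k : ℤ) - 1) 1 1 (2 * ξh j - 1) *
        (x * (1 - x) * jacobiP ((k : ℤ) - 1) 1 1 (2 * x - 1)) := by
  have hnodes : Set.InjOn ξh (univ : Finset (Fin n)) := fun a _ b _ hab =>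
    hξinj (by rw [hξh, hξh] at hab; linarith)
  have hℓ_eval : ∀ i y, (Lagrange.basis univ ξh i).eval y = ℓ i y := fun i y => by
    simp [hℓ, Lagrange.basis, Lagrange.basisDivisor, eval_prod, div_eq_inv_mul]
  have hw_eq : ∀ i, w i = jacobiWeightIntegral (Lagrange.basis univ ξh i) := fun i => by
    simp only [hw, jacobiWeightIntegral_apply, hℓ_eval]
  have hroot : ∀ i ∈ univ, (shiftedJacobi #(univ : Finset (Fin n))).eval (ξh i) = 0 := by
    intro i _
    rw [card_univ, Fintype.card_fin, eval_shiftedJacobi, hξh, ← hξroot i]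
    congr 1
    ring
  rw [hℓm, ← hℓ_eval, isOrthogonalSequence_shiftedJacobi.basis_eq_sum hnodes hroot (mem_univ j),
    eval_finsetSum, card_univ, Fintype.card_fin, mul_sum, ← Ico_add_one_right_eq_Icc,
    sum_Ico_eq_sum_range, Nat.add_sub_cancel]
  refine sum_congr rfl fun i _ => ?_
  rw [show ((1 + i : ℕ) : ℤ) - 1 = i by push_cast; ring, jacobiP_natCast, jacobiP_natCast,
    ← eval_shiftedJacobi, ← eval_shiftedJacobi, eval_smul, smul_eq_mul, ← hw_eq,
    jacobiWeightIntegral_shiftedJacobi_mul_self]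
  push_cast
  field_simp
  ring

/-- Lemma 1: expansion of the modified Lagrange basis `ℓ̊_j` in terms of
`x(1−x)P_{k−1}^{(1,1)}(2x−1)`, with coefficients
`λ_{jk} = [(2k+1)(k+1)/k]·[ŵ_j/(ξ̂_j(1−ξ̂_j))]·P_{k−1}^{(1,1)}(2ξ̂_j−1)`. -/
theorem modified_basis_expansion (n : ℕ) (hn : 1 ≤ n) (ξ : Fin n → ℝ)
    (hξmem : ∀ i, ξ i ∈ Set.Ioo (-1 : ℝ) 1)
    (hξinj : Function.Injective ξ)
    (hξroot : ∀ i, jacobiPNat n 1 1 (ξ i) = 0)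
    (ξh : Fin n → ℝ) (hξh : ∀ i, ξh i = (ξ i + 1) / 2)
    (ℓ : Fin n → ℝ → ℝ)
    (hℓ : ∀ j x, ℓ j x = ∏ k ∈ Finset.univ.erase j, (x - ξh k) / (ξh j - ξh k))
    (ℓm : Fin n → ℝ → ℝ)
    (hℓm : ∀ j x, ℓm j x = (x * (1 - x) / (ξh j * (1 - ξh j))) * ℓ j x)
    (w : Fin n → ℝ) (hw : ∀ j, w j = ∫ x in (0:ℝ)..1, x * (1 - x) * ℓ j x)
    (j : Fin n) (x : ℝ) :
    ℓm j x = ∑ k ∈ Finset.Icc 1 n,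
      ((2 * (k : ℝ) + 1) * ((k : ℝ) + 1) / (k : ℝ)) * (w j / (ξh j * (1 - ξh j))) *
        jacobiP ((k : ℤ) - 1) 1 1 (2 * ξh j - 1) *
        (x * (1 - x) * jacobiP ((k : ℤ) - 1) 1 1 (2 * x - 1)) :=
  modified_basis_expansion_general n ξ hξinj hξroot ξh hξh ℓ hℓ ℓm hℓm w hw j x
end

section
/- Let 0 < β < 1 and k ≥ 1. Then for every x ∈ (0,1], the left Riemann–Liouville fractional derivative of order 2−β of the function s ↦ s(1−s)·P_{k−1}^{(1,1)}(2s−1) exists at x and equals ζ_k(x); that is, ₀D_x^{2−β}[x(1−x)P_{k−1}^{(1,1)}(2x−1)] = ζ_k(x). -/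
/-!
Expanding `P_{k-1}^{(1,1)}(2s-1)` in powers of `s` turns `s(1-s)P_{k-1}^{(1,1)}(2s-1)` into a
polynomial. The Riemann–Liouville integral of a monomial is a Beta integral,
`∫_0^t (t-s)^(β-1) s^p ds = Γ(β) p! t^(p+β) / Γ(p+β+1)`, and the power rule
`d/dt [t^v / Γ(v+1)] = t^(v-1) / Γ(v)` then gives `₀D_x^{2-β} s^p = p! x^(p+β-2) / Γ(p+β-1)`.
It remains to recognise the coefficients of `x^(β-1) x^m` and `x^β x^m` as those of the Jacobi
polynomials in `ζ_k`. The coefficients of `P_n^{(a,b)}(2x-1)` follow from a Chu–Vandermonde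
identity, and the comparison reduces to `Γ(s+1) = sΓ(s)` and the contiguity relation
`y (y+1)_m = (y+m) (y)_m` of Pochhammer symbols.
-/

open Real MeasureTheory intervalIntegral Finset

open Nat Topology

/-- Valid at `s = 0` as well, because `Gamma 0 = 0`. -/
lemma Real.inv_Gamma_eq_self_mul_inv_Gamma_add_one (s : ℝ) :
    (Gamma s)⁻¹ = s * (Gamma (s + 1))⁻¹ := by
  rcases ne_or_eq s 0 with hs | rfl
  · rw [Gamma_add_one hs, mul_inv, mul_inv_cancel_left₀ hs]
  · rw [zero_add, Gamma_zero, inv_zero, zero_mul]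

lemma hasDerivAt_rpow_div_Gamma {t : ℝ} (ht : 0 < t) (v : ℝ) :
    HasDerivAt (fun t => t ^ v / Gamma (v + 1)) (t ^ (v - 1) / Gamma v) t := by
  refine ((hasDerivAt_rpow_const (p := v) (Or.inl ht.ne')).div_const _).congr_deriv ?_
  rw [div_eq_mul_inv, div_eq_mul_inv, inv_Gamma_eq_self_mul_inv_Gamma_add_one v]
  ring

lemma hasDerivAt_sum_rpow_div_Gamma {ι : Type*} (S : Finset ι) (a e : ι → ℝ) {t : ℝ}
    (ht : 0 < t) (v : ℝ) :
    HasDerivAt (fun t => ∑ i ∈ S, a i * (t ^ (e i + v) / Gamma (e i + v + 1)))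
      (∑ i ∈ S, a i * (t ^ (e i + (v - 1)) / Gamma (e i + (v - 1) + 1))) t := by
  refine HasDerivAt.fun_sum fun i _ => ?_
  rw [← add_sub_assoc, sub_add_cancel]
  exact (hasDerivAt_rpow_div_Gamma ht (e i + v)).const_mul (a i)

lemma intervalIntegrable_sub_rpow_mul_pow {β : ℝ} (hβ : 0 < β) (t : ℝ) (p : ℕ) :
    IntervalIntegrable (fun s => (t - s) ^ (β - 1) * s ^ p) volume 0 t := by
  have h := (intervalIntegral.intervalIntegrable_rpow' (a := t) (b := 0) (r := β - 1)
    (by linarith)).comp_sub_left t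
  simp only [sub_self, sub_zero] at h
  exact h.mul_continuousOn (continuous_pow p).continuousOn

lemma integral_sub_rpow_mul_pow {β t : ℝ} (hβ : 0 < β) (ht : 0 < t) (p : ℕ) :
    ∫ s in (0:ℝ)..t, (t - s) ^ (β - 1) * s ^ p =
      Gamma β * p ! * (t ^ (p + β) / Gamma (p + β + 1)) := by
  have hbeta := Complex.betaIntegral_scaled (p + 1) β ht
  have hGamma := Complex.Gamma_mul_Gamma_eq_betaIntegral (s := p + 1) (t := β)
    (by simp; positivity) (by simpa using hβ)
  have hΓ : Gamma (p + β + 1) ≠ 0 := (Gamma_pos_of_pos (by positivity)).ne'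
  have hofReal : ∫ s in (0:ℝ)..t, (s : ℂ) ^ ((p : ℂ) + 1 - 1) * ((t : ℂ) - s) ^ ((β : ℂ) - 1) =
      ((∫ s in (0:ℝ)..t, (t - s) ^ (β - 1) * s ^ p : ℝ) : ℂ) := by
    rw [← intervalIntegral.integral_ofReal]
    refine intervalIntegral.integral_congr fun s hs => ?_
    rw [Set.uIcc_of_le ht.le] at hs
    push_cast
    rw [add_sub_cancel_right, Complex.cpow_natCast, ← Complex.ofReal_sub,
      Complex.ofReal_cpow (by linarith [hs.2])]
    push_cast
    ring
  rw [Complex.Gamma_nat_eq_factorial, Complex.Gamma_ofReal,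
    show (p : ℂ) + 1 + β = ((p + β + 1 : ℝ) : ℂ) by push_cast; ring, Complex.Gamma_ofReal] at hGamma
  rw [hofReal, show (p : ℂ) + 1 + β - 1 = ((p + β : ℝ) : ℂ) by push_cast; ring,
    ← Complex.ofReal_cpow ht.le, ← mul_div_cancel_left₀ (Complex.betaIntegral _ _)
      (Complex.ofReal_ne_zero.mpr hΓ), ← hGamma, ← Complex.ofReal_natCast, ← Complex.ofReal_mul,
    ← Complex.ofReal_div, ← Complex.ofReal_mul, Complex.ofReal_inj] at hbeta
  rw [hbeta]
  ring

theorem leftRL_sum_monomials {β x : ℝ} (hβ : 0 < β) (hx : 0 < x) {ι : Type*} (S : Finset ι)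
    (c : ι → ℝ) (e : ι → ℕ) (g : ℝ → ℝ) (hg : ∀ s, g s = ∑ i ∈ S, c i * s ^ e i) :
    DifferentiableAt ℝ (deriv (fun t => ∫ s in (0:ℝ)..t, (t - s) ^ (1 - (2 - β)) * g s)) x ∧
      leftRL (2 - β) g x = ∑ i ∈ S, c i * (e i)! * (x ^ (e i + β - 2) / Gamma (e i + β - 1)) := by
  set F : ℝ → ℝ → ℝ := fun v t =>
    ∑ i ∈ S, c i * (e i)! * (t ^ ((e i : ℝ) + v) / Gamma (e i + v + 1))
  have hintegral : ∀ t, 0 < t →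
      ∫ s in (0:ℝ)..t, (t - s) ^ (1 - (2 - β)) * g s = Gamma β * F β t := by
    intro t ht
    rw [show 1 - (2 - β) = β - 1 by ring]
    simp_rw [hg, Finset.mul_sum, mul_left_comm _ (c _)]
    rw [intervalIntegral.integral_finsetSum fun i _ =>
      (intervalIntegrable_sub_rpow_mul_pow hβ t (e i)).const_mul (c i), Finset.mul_sum]
    refine Finset.sum_congr rfl fun i _ => ?_
    rw [intervalIntegral.integral_const_mul, integral_sub_rpow_mul_pow hβ ht]
    ring
  have hderiv : ∀ v t, 0 < t → HasDerivAt (F v) (F (v - 1) t) t := fun v t ht =>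
    hasDerivAt_sum_rpow_div_Gamma S (fun i => c i * (e i)!) (fun i => e i) ht v
  have hI : (fun t => ∫ s in (0:ℝ)..t, (t - s) ^ (1 - (2 - β)) * g s) =ᶠ[𝓝 x]
      fun t => Gamma β * F β t :=
    Filter.eventually_of_mem (Ioi_mem_nhds hx) hintegral
  have hI' : deriv (fun t => ∫ s in (0:ℝ)..t, (t - s) ^ (1 - (2 - β)) * g s) =ᶠ[𝓝 x]
      fun t => Gamma β * F (β - 1) t :=
    hI.deriv.trans (Filter.eventually_of_mem (Ioi_mem_nhds hx) fun t ht =>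
      ((hderiv β t ht).const_mul _).deriv)
  have hI'' := (hderiv (β - 1) x hx).const_mul (Gamma β)
  refine ⟨hI'.differentiableAt_iff.mpr hI''.differentiableAt, ?_⟩
  rw [leftRL, hI'.deriv_eq, hI''.deriv, sub_sub_cancel, one_div,
    inv_mul_cancel_left₀ (Gamma_pos_of_pos hβ).ne']
  refine Finset.sum_congr rfl fun i _ => ?_
  ring_nf

/-- Chu–Vandermonde identity, in terms of the entire function `1/Γ`. -/
lemma sum_antidiagonal_choose_mul_inv_Gamma (m : ℕ) (A B : ℝ) :
    ∑ p ∈ antidiagonal m, (m.choose p.1 : ℝ) * ((Gamma (A + p.1))⁻¹ * (Gamma (B + p.2))⁻¹) =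
      (ascPochhammer ℝ m).eval (A + B + m - 1) * ((Gamma (A + m))⁻¹ * (Gamma (B + m))⁻¹) := by
  induction m generalizing A B with
  | zero => simp
  | succ m ih =>
    have hpascal := Finset.sum_antidiagonal_choose_succ_mul
      (fun i j => (Gamma (A + i))⁻¹ * (Gamma (B + j))⁻¹) m
    simp only [Nat.cast_add, Nat.cast_one] at hpascal
    rw [hpascal]
    nth_rewrite 2 [← Finset.Nat.sum_antidiagonal_swap]
    simp only [Prod.fst_swap, Prod.snd_swap]
    simp_rw [← add_assoc, add_right_comm _ _ (1:ℝ), mul_comm (Gamma (A + 1 + _))⁻¹]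
    rw [ih, ih]
    push_cast
    rw [inv_Gamma_eq_self_mul_inv_Gamma_add_one (A + m),
      inv_Gamma_eq_self_mul_inv_Gamma_add_one (B + m), ascPochhammer_succ_eval]
    ring_nf

open Polynomial in
lemma sum_mul_sub_one_pow_mul_pow (f : ℕ → ℝ) (n : ℕ) (x : ℝ) :
    ∑ j ∈ range (n + 1), f j * ((x - 1) ^ j * x ^ (n - j)) =
      ∑ m ∈ range (n + 1), (-1) ^ (n - m) *
        (∑ i ∈ range (m + 1), ((n - m + i).choose i : ℝ) * f (n - m + i)) * x ^ m := by
  set Q : ℝ[X] := ∑ j ∈ range (n + 1), C (f j) * ((X + C (-1)) ^ j * X ^ (n - j))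
  have hdeg : Q.natDegree < n + 1 := by
    refine Nat.lt_succ_of_le (natDegree_sum_le_of_forall_le _ _ fun j hj => ?_)
    compute_degree
    simp only [mem_range] at hj
    omega
  have hcoeff : ∀ m ≤ n, Q.coeff m =
      (-1) ^ (n - m) * ∑ i ∈ range (m + 1), ((n - m + i).choose i : ℝ) * f (n - m + i) := by
    intro m hm
    simp only [Q, finsetSum_coeff, coeff_C_mul, coeff_mul_X_pow', coeff_X_add_C_pow]
    rw [show n + 1 = (n - m) + (m + 1) by omega, Finset.sum_range_add, Finset.mul_sum,
      Finset.sum_eq_zero fun j hj => by rw [if_neg (by simp at hj; omega), mul_zero], zero_add]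
    refine Finset.sum_congr rfl fun i hi => ?_
    rw [mem_range] at hi
    rw [if_pos (by omega), show m - (n - (n - m + i)) = i by omega,
      show n - m + i - i = n - m by omega]
    ring
  have hQ := eval_eq_sum_range' hdeg x
  simp only [Q, eval_finsetSum, eval_mul, eval_C, eval_pow, eval_add, eval_X,
    ← sub_eq_add_neg] at hQ
  rw [hQ]
  exact Finset.sum_congr rfl fun m hm => by rw [hcoeff m (by simpa [Nat.lt_succ_iff] using hm)]

noncomputable def shiftedJacobiCoeff (n m : ℕ) (a b : ℝ) : ℝ :=
  (-1) ^ (n - m) * (Gamma (n + b + 1) / Gamma (m + b + 1)) *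
    (ascPochhammer ℝ m).eval (n + a + b + 1) / (m ! * (n - m)!)

lemma jacobiPNat_two_mul_sub_one_eq_sum (n : ℕ) (a b x : ℝ) :
    jacobiPNat n a b (2 * x - 1) = ∑ j ∈ range (n + 1),
      Gamma (n + a + 1) / (Gamma (j + a + 1) * (n - j)!) *
        (Gamma (n + b + 1) / (Gamma ((n - j : ℕ) + b + 1) * j !)) *
        ((x - 1) ^ j * x ^ (n - j)) := by
  rw [jacobiPNat, Finset.mul_sum]
  refine Finset.sum_congr rfl fun j hj => ?_
  have h2 : (2 : ℝ) ^ n = 2 ^ j * 2 ^ (n - j) := by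
    rw [← pow_add, Nat.add_sub_cancel' (by simpa [Nat.lt_succ_iff] using hj)]
  rw [show 2 * x - 1 - 1 = 2 * (x - 1) by ring, show 2 * x - 1 + 1 = 2 * x by ring, mul_pow,
    mul_pow, h2]
  field_simp

lemma coeff_sum_eq_shiftedJacobiCoeff {n m : ℕ} (hm : m ≤ n) {a : ℝ} (ha : -1 < a) (b : ℝ) :
    (-1) ^ (n - m) * ∑ i ∈ range (m + 1), ((n - m + i).choose i : ℝ) *
      (Gamma (n + a + 1) / (Gamma ((n - m + i : ℕ) + a + 1) * (n - (n - m + i))!) *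
        (Gamma (n + b + 1) / (Gamma ((n - (n - m + i) : ℕ) + b + 1) * (n - m + i)!))) =
      shiftedJacobiCoeff n m a b := by
  set r := n - m
  have hterm : ∀ i ∈ range (m + 1), ((r + i).choose i : ℝ) *
      (Gamma (n + a + 1) / (Gamma ((r + i : ℕ) + a + 1) * (n - (r + i))!) *
        (Gamma (n + b + 1) / (Gamma ((n - (r + i) : ℕ) + b + 1) * (r + i)!))) =
      Gamma (n + a + 1) * Gamma (n + b + 1) / (r ! * m !) *
        ((m.choose i : ℝ) * ((Gamma ((r + a + 1) + i))⁻¹ * (Gamma ((b + 1) + (m - i : ℕ)))⁻¹)) := by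
    intro i hi
    have him : i ≤ m := by simpa [Nat.lt_succ_iff] using hi
    rw [show n - (r + i) = m - i by omega, Nat.cast_choose ℝ (Nat.le_add_left i r),
      Nat.cast_choose ℝ him, Nat.add_sub_cancel]
    push_cast
    field_simp
    ring_nf
  rw [Finset.sum_congr rfl hterm, ← Finset.mul_sum,
    ← Finset.Nat.sum_antidiagonal_eq_sum_range_succ fun i j =>
      (m.choose i : ℝ) * ((Gamma ((r + a + 1) + i))⁻¹ * (Gamma ((b + 1) + j))⁻¹),
    sum_antidiagonal_choose_mul_inv_Gamma]
  have hr : (r : ℝ) = n - m := Nat.cast_sub hm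
  have hΓ : Gamma (n + a + 1) ≠ 0 := (Gamma_pos_of_pos (by linarith [n.cast_nonneg (α := ℝ)])).ne'
  rw [shiftedJacobiCoeff, show (r : ℝ) + a + 1 + m = n + a + 1 by rw [hr]; ring,
    show (r : ℝ) + a + 1 + (b + 1) + m - 1 = n + a + b + 1 by rw [hr]; ring,
    show b + 1 + (m : ℝ) = m + b + 1 by ring]
  field_simp
  simp only [r]
  ring

theorem jacobiPNat_two_mul_sub_one (n : ℕ) {a : ℝ} (ha : -1 < a) (b x : ℝ) :
    jacobiPNat n a b (2 * x - 1) = ∑ m ∈ range (n + 1), shiftedJacobiCoeff n m a b * x ^ m := by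
  rw [jacobiPNat_two_mul_sub_one_eq_sum, sum_mul_sub_one_pow_mul_pow]
  refine Finset.sum_congr rfl fun m hm => ?_
  rw [coeff_sum_eq_shiftedJacobiCoeff (by simpa [Nat.lt_succ_iff] using hm) ha]

lemma jacobiP_natCast_sub_one_two_mul_sub_one (n : ℕ) {a : ℝ} (ha : -1 < a) (b x : ℝ) :
    jacobiP ((n : ℤ) - 1) a b (2 * x - 1) =
      ∑ m ∈ range n, shiftedJacobiCoeff (n - 1) m a b * x ^ m := by
  cases n with
  | zero => simp [jacobiP]
  | succ n => simp [jacobiP, jacobiPNat_two_mul_sub_one n ha]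

lemma jacobiP_natCast_succ_sub_one (n : ℕ) (a b τ : ℝ) :
    jacobiP (((n + 1 : ℕ) : ℤ) - 1) a b τ = jacobiPNat n a b τ := by
  simp [jacobiP]

lemma Real.Gamma_natCast_add_two (m : ℕ) : Gamma (m + 2) = (m + 1)! := by
  rw [show (m : ℝ) + 2 = (m + 1 : ℕ) + 1 by push_cast; ring, Gamma_nat_eq_factorial]

lemma ascPochhammer_eval_add_one_mul (m : ℕ) (y : ℝ) :
    (ascPochhammer ℝ m).eval (y + 1) * y = (ascPochhammer ℝ m).eval y * (y + m) := by
  rw [← ascPochhammer_succ_eval, ascPochhammer_succ_left]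
  simp [mul_comm]

section CoefficientIdentities

variable {β : ℝ}

lemma shiftedJacobiCoeff_one_one_mul (hβ : 0 < β) (n m : ℕ) :
    shiftedJacobiCoeff n m 1 1 * ((m + 1)! / Gamma (m + β)) =
      Gamma (n + 2) / Gamma (n + β) * shiftedJacobiCoeff n m (3 - β) (β - 1) := by
  have hΓ : Gamma (n + β) ≠ 0 := (Gamma_pos_of_pos (by positivity)).ne'
  simp only [shiftedJacobiCoeff, add_assoc, one_add_one_eq_two, sub_add_cancel,
    two_add_one_eq_three, Gamma_natCast_add_two]
  field_simp

lemma shiftedJacobiCoeff_self_one_one_mul (hβ : 0 < β) (n : ℕ) :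
    shiftedJacobiCoeff n n 1 1 * ((n + 2)! / Gamma (n + 1 + β)) =
      Gamma (n + 3) / Gamma (n + 1 + β) * ((n + 3) / (2 * n + 3)) *
        shiftedJacobiCoeff n n (3 - β) β := by
  have hP := ascPochhammer_eval_add_one_mul n (n + 3)
  have hΓ : Gamma (n + 1 + β) ≠ 0 := (Gamma_pos_of_pos (by positivity)).ne'
  have hΓ3 : Gamma (n + 3) = (n + 2)! := by
    rw [show (n : ℝ) + 3 = (n + 2 : ℕ) + 1 by push_cast; ring, Gamma_nat_eq_factorial]
  simp only [shiftedJacobiCoeff, Nat.sub_self, pow_zero, factorial_zero, Nat.cast_one, mul_one,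
    show (n : ℝ) + (3 - β) + β + 1 = n + 3 + 1 by ring, show (n : ℝ) + 1 + 1 = n + 2 by ring,
    show (n : ℝ) + 2 + 1 = n + 3 by ring, show (n : ℝ) + β + 1 = n + 1 + β by ring]
  rw [hΓ3]
  field_simp
  linear_combination (-1) * hP

lemma shiftedJacobiCoeff_one_one_mul_of_lt (hβ : 0 < β) {n m : ℕ} (hm : m < n) :
    shiftedJacobiCoeff n m 1 1 * ((m + 2)! / Gamma (m + 1 + β)) =
      Gamma (n + 3) / Gamma (n + 1 + β) * ((n + 3) / (2 * n + 3)) *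
          shiftedJacobiCoeff n m (3 - β) β +
        Gamma (n + 2) / Gamma (n + β) * ((n + 1) / (2 * n + 3)) *
          shiftedJacobiCoeff (n - 1) m (3 - β) β := by
  obtain ⟨r, rfl⟩ := Nat.exists_eq_add_of_lt hm
  have hP : (ascPochhammer ℝ m).eval ((m : ℝ) + r + 5) =
      (ascPochhammer ℝ m).eval ((m : ℝ) + r + 4) * (2 * m + r + 4) / (m + r + 4) := by
    rw [eq_div_iff (by positivity), show (m : ℝ) + r + 5 = m + r + 4 + 1 by ring,
      ascPochhammer_eval_add_one_mul]
    ring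
  have hΓn : Gamma (m + r + 4) = (m + r + 3) * Gamma (m + r + 3) := by
    rw [← Gamma_add_one (by positivity)]; ring_nf
  have hΓβ : Gamma (m + r + 2 + β) = (m + r + 1 + β) * Gamma (m + r + 1 + β) := by
    rw [← Gamma_add_one (by positivity)]; ring_nf
  have hΓm : Gamma (m + 2) = (m + 1) * m ! := by
    rw [Gamma_natCast_add_two, factorial_succ]; push_cast; ring
  have hΓ₁ : Gamma (m + r + 1 + β) ≠ 0 := (Gamma_pos_of_pos (by positivity)).ne'
  have hΓ₂ : Gamma (m + 1 + β) ≠ 0 := (Gamma_pos_of_pos (by positivity)).ne'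
  have hΓ₃ : Gamma (m + r + 3) ≠ 0 := (Gamma_pos_of_pos (by positivity)).ne'
  simp only [shiftedJacobiCoeff, show m + r + 1 - m = r + 1 by omega, Nat.add_sub_cancel,
    Nat.add_sub_cancel_left, pow_succ, factorial_succ]
  push_cast
  ring_nf at hP hΓn hΓβ hΓm hΓ₁ hΓ₂ hΓ₃ ⊢
  rw [hP, hΓn, hΓβ, hΓm]
  -- the common factor cancels, leaving `(n + 2) (n + m + 3) - (n + 1) (n - m) = (2n + 3) (m + 2)`
  field_simp
  ring

lemma sum_shiftedJacobiCoeff_one_one_mul_factorial_succ (hβ₀ : 0 < β) (hβ₁ : β < 1) (n : ℕ)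
    (x : ℝ) :
    ∑ m ∈ range (n + 1), shiftedJacobiCoeff n m 1 1 * ((m + 1)! / Gamma (m + β)) * x ^ m =
      Gamma (n + 2) / Gamma (n + β) * jacobiPNat n (3 - β) (β - 1) (2 * x - 1) := by
  rw [jacobiPNat_two_mul_sub_one n (by linarith), Finset.mul_sum]
  refine Finset.sum_congr rfl fun m _ => ?_
  rw [shiftedJacobiCoeff_one_one_mul hβ₀, mul_assoc]

lemma sum_shiftedJacobiCoeff_one_one_mul_factorial_add_two (hβ₀ : 0 < β) (hβ₁ : β < 1) (n : ℕ)
    (x : ℝ) :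
    ∑ m ∈ range (n + 1), shiftedJacobiCoeff n m 1 1 * ((m + 2)! / Gamma (m + 1 + β)) * x ^ m =
      Gamma (n + 3) / Gamma (n + 1 + β) * ((n + 3) / (2 * n + 3)) *
          jacobiPNat n (3 - β) β (2 * x - 1) +
        Gamma (n + 2) / Gamma (n + β) * ((n + 1) / (2 * n + 3)) *
          jacobiP ((n : ℤ) - 1) (3 - β) β (2 * x - 1) := by
  rw [jacobiPNat_two_mul_sub_one n (by linarith),
    jacobiP_natCast_sub_one_two_mul_sub_one n (by linarith), Finset.mul_sum, Finset.mul_sum,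
    Finset.sum_range_succ, Finset.sum_range_succ, shiftedJacobiCoeff_self_one_one_mul hβ₀]
  have hlow : ∀ m ∈ range n,
      shiftedJacobiCoeff n m 1 1 * ((m + 2)! / Gamma (m + 1 + β)) * x ^ m = _ := fun m hm =>
    congrArg (· * x ^ m) (shiftedJacobiCoeff_one_one_mul_of_lt hβ₀ (Finset.mem_range.mp hm))
  rw [Finset.sum_congr rfl hlow]
  simp only [add_mul, Finset.sum_add_distrib, mul_assoc]
  ring

end CoefficientIdentities

lemma zeta_succ (β : ℝ) (n : ℕ) (x : ℝ) :
    zeta β (n + 1) x =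
      Gamma (n + 2) / Gamma (n + β) * jacobiPNat n (3 - β) (β - 1) (2 * x - 1) * x ^ (β - 1) -
        (Gamma (n + 3) / Gamma (n + 1 + β) * ((n + 3) / (2 * n + 3)) *
            jacobiPNat n (3 - β) β (2 * x - 1) +
          Gamma (n + 2) / Gamma (n + β) * ((n + 1) / (2 * n + 3)) *
            jacobiP ((n : ℤ) - 1) (3 - β) β (2 * x - 1)) * x ^ β := by
  rw [zeta, jacobiP_natCast_succ_sub_one, jacobiP_natCast_succ_sub_one,
    show ((n + 1 : ℕ) : ℤ) - 2 = (n : ℤ) - 1 by push_cast; ring]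
  push_cast
  simp only [show (n : ℝ) + 1 + 1 = n + 2 by ring, show (n : ℝ) + 1 - 1 + β = n + β by ring,
    show (n : ℝ) + 1 + 2 = n + 3 by ring, show 2 * ((n : ℝ) + 1) + 1 = 2 * n + 3 by ring]
  ring

lemma mul_one_sub_mul_jacobiPNat_one_one (n : ℕ) (s : ℝ) :
    s * (1 - s) * jacobiPNat n 1 1 (2 * s - 1) =
      ∑ i ∈ (range (n + 1)).disjSum (range (n + 1)),
        Sum.elim (shiftedJacobiCoeff n · 1 1) (-shiftedJacobiCoeff n · 1 1) i *
          s ^ Sum.elim (· + 1) (· + 2) i := by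
  rw [jacobiPNat_two_mul_sub_one n (by norm_num), Finset.sum_disjSum, Finset.mul_sum,
    ← Finset.sum_add_distrib]
  refine Finset.sum_congr rfl fun m _ => ?_
  simp only [Sum.elim_inl, Sum.elim_inr]
  ring

lemma sum_disjSum_eq_zeta_succ {β : ℝ} (hβ₀ : 0 < β) (hβ₁ : β < 1) (n : ℕ) {x : ℝ}
    (hx : 0 < x) :
    ∑ i ∈ (range (n + 1)).disjSum (range (n + 1)),
        Sum.elim (shiftedJacobiCoeff n · 1 1) (-shiftedJacobiCoeff n · 1 1) i *
          (Sum.elim (· + 1) (· + 2) i)! *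
          (x ^ ((Sum.elim (· + 1) (· + 2) i : ℕ) + β - 2) /
            Gamma ((Sum.elim (· + 1) (· + 2) i : ℕ) + β - 1)) =
      zeta β (n + 1) x := by
  rw [Finset.sum_disjSum, zeta_succ, ← sum_shiftedJacobiCoeff_one_one_mul_factorial_succ hβ₀ hβ₁,
    ← sum_shiftedJacobiCoeff_one_one_mul_factorial_add_two hβ₀ hβ₁, Finset.sum_mul,
    Finset.sum_mul, sub_eq_add_neg, ← Finset.sum_neg_distrib]
  congr 1 <;> refine Finset.sum_congr rfl fun m _ => ?_ <;> simp only [Sum.elim_inl, Sum.elim_inr]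
  · rw [show ((m + 1 : ℕ) : ℝ) + β - 2 = m + (β - 1) by push_cast; ring, rpow_add hx,
      rpow_natCast]
    push_cast
    ring_nf
  · rw [show ((m + 2 : ℕ) : ℝ) + β - 2 = m + β by push_cast; ring, rpow_add hx, rpow_natCast]
    push_cast
    ring_nf

/-- For `0 < β < 1`, `k ≥ 1` and `x ∈ (0,1]`, the left Riemann--Liouville
fractional derivative of order `2−β` of `s ↦ s(1−s)P_{k−1}^{(1,1)}(2s−1)` exists at `x`
(i.e. the first derivative of the underlying integral function is differentiable at `x`)
and equals `ζ_k(x)`. -/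
theorem leftRL_modified_basis (β : ℝ) (hβ0 : 0 < β) (hβ1 : β < 1) (k : ℕ) (hk : 1 ≤ k)
    (x : ℝ) (hx : x ∈ Set.Ioc (0:ℝ) 1) :
    DifferentiableAt ℝ
      (deriv (fun t : ℝ => ∫ s in (0:ℝ)..t,
        (t - s) ^ (1 - (2 - β)) * (s * (1 - s) * jacobiP ((k : ℤ) - 1) 1 1 (2 * s - 1)))) x
    ∧ leftRL (2 - β) (fun s : ℝ => s * (1 - s) * jacobiP ((k : ℤ) - 1) 1 1 (2 * s - 1)) x =
        zeta β k x := by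
  obtain ⟨n, rfl⟩ : ∃ n, k = n + 1 := ⟨k - 1, by omega⟩
  have hpoly (s : ℝ) := jacobiP_natCast_succ_sub_one n 1 1 (2 * s - 1) ▸
    mul_one_sub_mul_jacobiPNat_one_one n s
  obtain ⟨hdiff, hRL⟩ := leftRL_sum_monomials hβ0 hx.1 _ _ _ _ hpoly
  exact ⟨hdiff, hRL.trans (sum_disjSum_eq_zeta_succ hβ0 hβ1 n hx.1)⟩
end

section
/- Let n ≥ 1, let ξ̂_1,…,ξ̂_n ∈ (0,1) be the shifted Jacobi–Gauss nodes (the zeros of x ↦ P_n^{(1,1)}(2x−1)), and let ŵ_j := ∫_0^1 x(1−x) ℓ_j(x) dx be the corresponding weights. Then for every real polynomial p of degree at most 2n−1, ∫_0^1 x(1−x) p(x) dx = Σ_{j=1}^{n} ŵ_j p(ξ̂_j). -/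
open Real MeasureTheory intervalIntegral Finset

/-! Writing `Q(x) = P_n^{(1,1)}(2x-1)`, an explicit beta-integral computation reduces
`∫₀¹ x(1-x) xᵐ Q(x) dx` to an `n`-th finite difference of a polynomial of degree `m`, which vanishes
for `m < n`. Hence `Q` is orthogonal to all polynomials of degree `< n`. Since `Q` has degree `n`
and vanishes at the `n` distinct nodes, it is a nonzero multiple of the nodal polynomial `ω`, and
the classical Gauss argument applies: dividing `p = ω q + r` with `deg q, deg r < n`, the
`ω q` part integrates to zero and `r` is reproduced exactly by Lagrange interpolation at the nodes.
-/

open Polynomial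
open scoped Nat

namespace Lagrange

variable {K ι : Type*} [Field K] {s : Finset ι} {v : ι → K}

theorem eq_C_coeff_mul_nodal (hvs : Set.InjOn v s) {f : K[X]} (hf : f.natDegree ≤ #s)
    (hroots : ∀ i ∈ s, f.eval (v i) = 0) : f = C (f.coeff #s) * nodal s v := by
  refine eq_of_degree_sub_lt_of_eval_index_eq s hvs ?_ fun i hi => by
    rw [eval_mul, eval_nodal_at_node hi, mul_zero, hroots i hi]
  rw [degree_lt_iff_coeff_zero]
  intro m hm
  rw [coeff_sub, coeff_C_mul]
  rcases (show #s ≤ m by exact_mod_cast hm).eq_or_lt with rfl | hlt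
  · rw [← natDegree_nodal (v := v), nodal_monic.coeff_natDegree, natDegree_nodal, mul_one,
      sub_self]
  · rw [coeff_eq_zero_of_natDegree_lt (hf.trans_lt hlt),
      coeff_eq_zero_of_natDegree_lt (natDegree_nodal.trans_lt hlt), mul_zero, sub_zero]

variable [DecidableEq ι]

theorem eval_basis (i : ι) (x : K) :
    (Lagrange.basis s v i).eval x = ∏ j ∈ s.erase i, (x - v j) / (v i - v j) := by
  simp only [Lagrange.basis, basisDivisor, eval_prod, eval_mul, eval_C, eval_sub, eval_X]
  exact prod_congr rfl fun j _ => by rw [div_eq_inv_mul]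

theorem gauss_quadrature_exact (L : K[X] →ₗ[K] K) (hvs : Set.InjOn v s)
    (horth : ∀ q : K[X], q.natDegree < #s → L (q * nodal s v) = 0) {p : K[X]}
    (hp : p.natDegree < 2 * #s) :
    L p = ∑ i ∈ s, L (Lagrange.basis s v i) * p.eval (v i) := by
  set r := p %ₘ nodal s v
  have hr : r.degree < #s := by
    simpa only [degree_nodal] using degree_modByMonic_lt p (nodal_monic (s := s) (v := v))
  have hquot : (p /ₘ nodal s v).natDegree < #s := by
    rw [natDegree_divByMonic _ nodal_monic, natDegree_nodal]; omega
  have hval : ∀ i ∈ s, r.eval (v i) = p.eval (v i) := fun i hi => by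
    conv_rhs => rw [← modByMonic_add_div p (nodal s v)]
    rw [eval_add, eval_mul, eval_nodal_at_node hi, zero_mul, add_zero]
  calc L p = L r + L (p /ₘ nodal s v * nodal s v) := by
        rw [← map_add, mul_comm, modByMonic_add_div p (nodal s v)]
    _ = L (interpolate s v fun i => r.eval (v i)) := by
        rw [horth _ hquot, add_zero, ← eq_interpolate hvs hr]
    _ = ∑ i ∈ s, L (Lagrange.basis s v i) * p.eval (v i) := by
        simp only [interpolate_apply, map_sum, ← smul_eq_C_mul, map_smul, smul_eq_mul]
        exact sum_congr rfl fun i hi => by rw [hval i hi, mul_comm]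

theorem gauss_quadrature_exact_of_orthogonal (L : K[X] →ₗ[K] K) (hvs : Set.InjOn v s) {Q : K[X]}
    (hQ : Q.natDegree ≤ #s) (hQs : Q.coeff #s ≠ 0) (hroots : ∀ i ∈ s, Q.eval (v i) = 0)
    (horth : ∀ q : K[X], q.natDegree < #s → L (q * Q) = 0) {p : K[X]}
    (hp : p.natDegree < 2 * #s) :
    L p = ∑ i ∈ s, L (Lagrange.basis s v i) * p.eval (v i) := by
  refine gauss_quadrature_exact L hvs (fun q hq => ?_) hp
  have := horth q hq
  rw [eq_C_coeff_mul_nodal hvs hQ hroots, mul_left_comm, ← smul_eq_C_mul, map_smul,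
    smul_eq_mul] at this
  exact (mul_eq_zero.1 this).resolve_left hQs

end Lagrange

theorem Polynomial.sum_range_choose_mul_eval_eq_zero {R : Type*} [CommRing R] {P : R[X]} {n : ℕ}
    (hP : P.natDegree < n) :
    ∑ k ∈ range (n + 1), (-1 : R) ^ (n - k) * n.choose k * P.eval (k : R) = 0 := by
  have := congr_fun (fwdDiff_iter_eq_zero_of_degree_lt hP) 0
  rw [fwdDiff_iter_eq_sum_shift] at this
  simpa [zsmul_eq_mul] using this

theorem sum_range_choose_mul_ascFactorial_eq_zero {m n : ℕ} (hm : m < n) :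
    ∑ j ∈ range (n + 1), (-1 : ℝ) ^ (n - j) * n.choose j * (j + 2).ascFactorial m = 0 := by
  have hdeg : ((ascPochhammer ℝ m).comp (X + 2)).natDegree = m := by
    rw [natDegree_comp, ascPochhammer_natDegree, ← C_ofNat, natDegree_X_add_C, mul_one]
  rw [← sum_range_choose_mul_eval_eq_zero (hdeg.trans_lt hm)]
  refine sum_congr rfl fun j _ => ?_
  rw [eval_comp, ← ascPochhammer_nat_eq_natCast_ascFactorial]
  simp

noncomputable def weightedIntegral (ρ : C(ℝ, ℝ)) (a b : ℝ) : ℝ[X] →ₗ[ℝ] ℝ where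
  toFun p := ∫ x in a..b, ρ x * p.eval x
  map_add' p q := by
    simp only [eval_add, mul_add]
    exact intervalIntegral.integral_add ((ρ.continuous.mul p.continuous).intervalIntegrable _ _)
      ((ρ.continuous.mul q.continuous).intervalIntegrable _ _)
  map_smul' c p := by
    simp only [eval_smul, smul_eq_mul, RingHom.id_apply, mul_left_comm _ c,
      intervalIntegral.integral_const_mul]

@[simp]
theorem weightedIntegral_apply (ρ : C(ℝ, ℝ)) (a b : ℝ) (p : ℝ[X]) :
    weightedIntegral ρ a b p = ∫ x in a..b, ρ x * p.eval x :=
  rfl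

theorem monic_X_pow_mul_X_sub_one_pow {R : Type*} [Ring R] (j k : ℕ) :
    ((X : R[X]) ^ j * (X - 1) ^ k).Monic :=
  (monic_X_pow j).mul ((monic_X_sub_C 1).pow k)

theorem natDegree_X_pow_mul_X_sub_one_pow {R : Type*} [Ring R] [Nontrivial R] (j k : ℕ) :
    ((X : R[X]) ^ j * (X - 1) ^ k).natDegree = j + k := by
  rw [← C_1, (monic_X_pow j).natDegree_mul ((monic_X_sub_C 1).pow k), natDegree_X_pow,
    (monic_X_sub_C 1).natDegree_pow, natDegree_X_sub_C, mul_one]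

theorem Gamma_div_Gamma_mul_factorial_eq_choose {n k : ℕ} (hk : k ≤ n) :
    Gamma ((n : ℝ) + 1 + 1) / (Gamma ((k : ℝ) + 1 + 1) * (n - k)!) =
      (n + 1).choose (k + 1) := by
  have hGamma (j : ℕ) : Gamma ((j : ℝ) + 1 + 1) = (j + 1)! := by
    exact_mod_cast Real.Gamma_nat_eq_factorial (j + 1)
  rw [hGamma, hGamma, Nat.cast_choose ℝ (by omega : k + 1 ≤ n + 1),
    show n + 1 - (k + 1) = n - k by omega]

noncomputable def shiftedJacobiOneOne (n : ℕ) : ℝ[X] :=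
  ∑ j ∈ range (n + 1),
    C ((n + 1).choose j * (n + 1).choose (j + 1) : ℝ) * (X ^ j * (X - 1) ^ (n - j))

theorem eval_shiftedJacobiOneOne (n : ℕ) (x : ℝ) :
    (shiftedJacobiOneOne n).eval x = jacobiPNat n 1 1 (2 * x - 1) := by
  rw [jacobiPNat, ← sum_range_reflect, mul_sum, shiftedJacobiOneOne, eval_finsetSum]
  refine sum_congr rfl fun j hj => ?_
  have hj : j ≤ n := by grind
  have hchoose := Gamma_div_Gamma_mul_factorial_eq_choose (Nat.sub_le n j)
  rw [Nat.sub_sub_self hj, Nat.choose_symm_of_eq_add (by omega : n + 1 = n - j + 1 + j)] at hchoose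
  rw [Nat.add_sub_cancel, Nat.sub_sub_self hj, hchoose, Gamma_div_Gamma_mul_factorial_eq_choose hj]
  simp only [eval_mul, eval_C, eval_pow, eval_sub, eval_X, eval_one]
  rw [show (2 * x - 1 - 1) = 2 * (x - 1) by ring, show 2 * x - 1 + 1 = 2 * x by ring, mul_pow,
    mul_pow, show (2 : ℝ) ^ n = 2 ^ (n - j) * 2 ^ j by rw [← pow_add, Nat.sub_add_cancel hj]]
  field_simp

theorem natDegree_shiftedJacobiOneOne_le (n : ℕ) : (shiftedJacobiOneOne n).natDegree ≤ n := by
  refine natDegree_sum_le_of_forall_le _ _ fun j hj => (natDegree_C_mul_le _ _).trans ?_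
  rw [natDegree_X_pow_mul_X_sub_one_pow]
  grind

theorem coeff_shiftedJacobiOneOne_pos (n : ℕ) : 0 < (shiftedJacobiOneOne n).coeff n := by
  have hlead : ∀ j ∈ range (n + 1), ((X : ℝ[X]) ^ j * (X - 1) ^ (n - j)).coeff n = 1 := by
    intro j hj
    have := (monic_X_pow_mul_X_sub_one_pow (R := ℝ) j (n - j)).coeff_natDegree
    rwa [natDegree_X_pow_mul_X_sub_one_pow, Nat.add_sub_cancel' (by grind)] at this
  simp only [shiftedJacobiOneOne, finsetSum_coeff, coeff_C_mul]
  rw [sum_congr rfl fun j hj => by rw [hlead j hj, mul_one]]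
  refine sum_pos (fun j hj => ?_) nonempty_range_add_one
  have hj : j ≤ n := by grind
  exact mul_pos (by exact_mod_cast Nat.choose_pos (by omega))
    (by exact_mod_cast Nat.choose_pos (by omega))

theorem integral_mul_pow_mul_eval_shiftedJacobiOneOne (m n : ℕ) :
    ∫ x in (0:ℝ)..1, x * (1 - x) * (x ^ m * (shiftedJacobiOneOne n).eval x) =
      (n + 1)! ^ 2 / (n ! * (n + m + 3)!) *
        ∑ j ∈ range (n + 1), (-1 : ℝ) ^ (n - j) * n.choose j * (j + 2).ascFactorial m := by
  have hpoint (x : ℝ) : x * (1 - x) * (x ^ m * (shiftedJacobiOneOne n).eval x) =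
      ∑ j ∈ range (n + 1), ((n + 1).choose j * (n + 1).choose (j + 1) * (-1) ^ (n - j) : ℝ) *
        (x ^ (j + m + 1) * (1 - x) ^ (n - j + 1)) := by
    simp only [shiftedJacobiOneOne, eval_finsetSum, mul_sum]
    refine sum_congr rfl fun j _ => ?_
    simp only [eval_mul, eval_C, eval_pow, eval_sub, eval_X, eval_one]
    rw [show x - 1 = -1 * (1 - x) by ring, mul_pow]
    ring
  simp only [hpoint, mul_sum]
  rw [intervalIntegral.integral_finsetSum fun j _ =>
    (by fun_prop : Continuous _).intervalIntegrable _ _]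
  refine sum_congr rfl fun j hj => ?_
  have hj : j ≤ n := by grind
  rw [intervalIntegral.integral_const_mul, integral_pow_mul_one_sub_pow,
    show j + m + 1 + (n - j + 1) + 1 = n + m + 3 by omega]
  have hchoose {a b : ℕ} (hb : b ≤ a) : (a.choose b * b ! * (a - b)! : ℝ) = a ! := by
    exact_mod_cast Nat.choose_mul_factorial_mul_factorial hb
  have h1 : ((n + 1).choose j * j ! * (n - j + 1)! : ℝ) = (n + 1)! := by
    rw [show n - j + 1 = n + 1 - j by omega, hchoose (by omega)]
  have h2 : ((n + 1).choose (j + 1) * (j + 1)! * (n - j)! : ℝ) = (n + 1)! := by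
    rw [show n - j = n + 1 - (j + 1) by omega, hchoose (by omega)]
  have hne : (n.choose j : ℝ) ≠ 0 := by exact_mod_cast (Nat.choose_pos hj).ne'
  have hasc : ((j + m + 1)! : ℝ) = (j + 1)! * (j + 2).ascFactorial m := by
    rw [show j + m + 1 = j + 1 + m by omega]
    exact_mod_cast (Nat.factorial_mul_ascFactorial (j + 1) m).symm
  -- expand `(j+m+1)!`, `n!` and `(n+1)!²` into the factorials of the left-hand side
  rw [hasc, ← hchoose hj, sq]
  nth_rewrite 1 [← h1]
  rw [← h2]
  field_simp

def shiftedJacobiWeight : C(ℝ, ℝ) := ⟨fun x => x * (1 - x), by fun_prop⟩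

@[simp]
theorem shiftedJacobiWeight_apply (x : ℝ) : shiftedJacobiWeight x = x * (1 - x) :=
  rfl

theorem weightedIntegral_mul_shiftedJacobiOneOne_eq_zero {n : ℕ} {q : ℝ[X]}
    (hq : q.natDegree < n) :
    weightedIntegral shiftedJacobiWeight 0 1 (q * shiftedJacobiOneOne n) = 0 := by
  rw [q.as_sum_range' n hq, sum_mul, map_sum]
  refine sum_eq_zero fun m hm => ?_
  rw [← C_mul_X_pow_eq_monomial, mul_assoc, ← smul_eq_C_mul, map_smul, smul_eq_mul]
  have hunfold : weightedIntegral shiftedJacobiWeight 0 1 (X ^ m * shiftedJacobiOneOne n) =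
      ∫ x in (0:ℝ)..1, x * (1 - x) * (x ^ m * (shiftedJacobiOneOne n).eval x) := by
    simp only [weightedIntegral_apply, shiftedJacobiWeight_apply, eval_mul, eval_pow, eval_X]
  rw [hunfold, integral_mul_pow_mul_eval_shiftedJacobiOneOne,
    sum_range_choose_mul_ascFactorial_eq_zero (mem_range.1 hm), mul_zero, mul_zero]

theorem jacobi_gauss_quadrature_exact_general (n : ℕ) (hn : 1 ≤ n) (ξh : Fin n → ℝ)
    (hξinj : Function.Injective ξh)
    (hξroot : ∀ i, jacobiPNat n 1 1 (2 * ξh i - 1) = 0)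
    (ℓ : Fin n → ℝ → ℝ)
    (hℓ : ∀ j x, ℓ j x = ∏ k ∈ Finset.univ.erase j, (x - ξh k) / (ξh j - ξh k))
    (w : Fin n → ℝ) (hw : ∀ j, w j = ∫ x in (0:ℝ)..1, x * (1 - x) * ℓ j x)
    (p : Polynomial ℝ) (hp : p.degree ≤ (2 * n - 1 : ℕ)) :
    ∫ x in (0:ℝ)..1, x * (1 - x) * p.eval x = ∑ j, w j * p.eval (ξh j) := by
  have hcard : #(univ : Finset (Fin n)) = n := card_fin n
  have hp' : p.natDegree < 2 * #(univ : Finset (Fin n)) := by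
    have := natDegree_le_iff_degree_le.2 hp
    omega
  have := Lagrange.gauss_quadrature_exact_of_orthogonal (weightedIntegral shiftedJacobiWeight 0 1)
    hξinj.injOn (Q := shiftedJacobiOneOne n)
    (by rw [hcard]; exact natDegree_shiftedJacobiOneOne_le n)
    (by rw [hcard]; exact (coeff_shiftedJacobiOneOne_pos n).ne')
    (fun i _ => by rw [eval_shiftedJacobiOneOne, hξroot])
    (fun q hq => weightedIntegral_mul_shiftedJacobiOneOne_eq_zero (by rwa [← hcard])) hp'
  simpa only [weightedIntegral_apply, shiftedJacobiWeight_apply, Lagrange.eval_basis, ← hℓ,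
    ← hw] using this

/-- the Jacobi--Gauss quadrature rule on `[0,1]` with weight `x(1−x)` based on
the `n` shifted Jacobi--Gauss nodes is exact for polynomials of degree at most `2n−1`. -/
theorem jacobi_gauss_quadrature_exact (n : ℕ) (hn : 1 ≤ n) (ξh : Fin n → ℝ)
    (hξmem : ∀ i, ξh i ∈ Set.Ioo (0 : ℝ) 1)
    (hξinj : Function.Injective ξh)
    (hξroot : ∀ i, jacobiPNat n 1 1 (2 * ξh i - 1) = 0)
    (ℓ : Fin n → ℝ → ℝ)
    (hℓ : ∀ j x, ℓ j x = ∏ k ∈ Finset.univ.erase j, (x - ξh k) / (ξh j - ξh k))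
    (w : Fin n → ℝ) (hw : ∀ j, w j = ∫ x in (0:ℝ)..1, x * (1 - x) * ℓ j x)
    (p : Polynomial ℝ) (hp : p.degree ≤ (2 * n - 1 : ℕ)) :
    ∫ x in (0:ℝ)..1, x * (1 - x) * p.eval x = ∑ j, w j * p.eval (ξh j) :=
  jacobi_gauss_quadrature_exact_general n hn ξh hξinj hξroot ℓ hℓ w hw p hp
end

section
/- Let a, b > −1 be real and n ≥ 1. Then the Jacobi polynomial P_n^{(a,b)} has exactly n roots in ℝ, all of which are simple (the derivative does not vanish at any root) and lie in the open interval (−1,1). -/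
open Real MeasureTheory intervalIntegral Finset

/-!
Rodrigues' formula writes `(1 - x)^a (1 + x)^b P_n^{(a,b)}(x)`, up to a nonzero constant, as the
`n`-th derivative of `(1 - x)^(n+a) (1 + x)^(n+b)` on `(-1, 1)`. Because `a, b > -1`, every
derivative of order `j < n` of this function extends continuously to `[-1, 1]` and vanishes at
`±1`, so Rolle's theorem, applied between consecutive zeros, produces from `j` distinct zeros in
`(-1, 1)` of the `j`-th derivative `j + 1` distinct zeros of the next one. Hence `P_n^{(a,b)}` has
`n` distinct zeros in `(-1, 1)`; since it is a polynomial of degree at most `n` that does not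
vanish at `1`, these are all its roots, and they are simple.
-/

open Polynomial

theorem Real.Gamma_add_one_eq_descPochhammer_eval_mul {s : ℝ} {i : ℕ} (h : (i : ℝ) < s + 1) :
    Gamma (s + 1) = (descPochhammer ℝ i).eval s * Gamma (s + 1 - i) := by
  induction i with
  | zero => simp
  | succ i ih =>
    push_cast at h ⊢
    rw [ih (by linarith), descPochhammer_succ_eval, show s + 1 - (i + 1) = s - i by ring,
      show s + 1 - i = (s - i) + 1 by ring, Real.Gamma_add_one (by linarith)]
    ring

section Leibniz

variable {𝕜 : Type*} [NontriviallyNormedField 𝕜]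

def leibnizSum (u v : ℕ → 𝕜 → 𝕜) (j : ℕ) (x : 𝕜) : 𝕜 :=
  ∑ i ∈ range (j + 1), (j.choose i : 𝕜) * u i x * v (j - i) x

theorem hasDerivAt_leibnizSum {u v : ℕ → 𝕜 → 𝕜} {x : 𝕜}
    (hu : ∀ i, HasDerivAt (u i) (u (i + 1) x) x) (hv : ∀ k, HasDerivAt (v k) (v (k + 1) x) x)
    (j : ℕ) : HasDerivAt (leibnizSum u v j) (leibnizSum u v (j + 1) x) x := by
  have hsum := HasDerivAt.fun_sum fun i (_ : i ∈ range (j + 1)) =>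
    ((hu i).const_mul (j.choose i : 𝕜)).mul (hv (j - i))
  refine hsum.congr_deriv ?_
  simp only [leibnizSum, mul_assoc]
  rw [sum_choose_succ_mul (fun i k => u i x * v k x), ← sum_add_distrib]
  refine sum_congr rfl fun i hi => ?_
  rw [Nat.sub_add_comm (Nat.lt_succ_iff.1 (mem_range.1 hi))]
  ring

end Leibniz

noncomputable def rpowIterDeriv (p : ℝ) (i : ℕ) (y : ℝ) : ℝ :=
  (descPochhammer ℝ i).eval p * y ^ (p - i)

theorem hasDerivAt_rpowIterDeriv (p : ℝ) (i : ℕ) {y : ℝ} (hy : y ≠ 0) :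
    HasDerivAt (rpowIterDeriv p i) (rpowIterDeriv p (i + 1) y) y := by
  refine ((Real.hasDerivAt_rpow_const (Or.inl hy)).const_mul _).congr_deriv ?_
  rw [rpowIterDeriv, descPochhammer_succ_eval]
  push_cast
  ring_nf

theorem continuous_rpowIterDeriv {p : ℝ} {i : ℕ} (h : (i : ℝ) ≤ p) :
    Continuous (rpowIterDeriv p i) :=
  continuous_const.mul (Real.continuous_rpow_const (sub_nonneg.2 h))

theorem rpowIterDeriv_zero {p : ℝ} {i : ℕ} (h : (i : ℝ) < p) : rpowIterDeriv p i 0 = 0 := by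
  rw [rpowIterDeriv, Real.zero_rpow (sub_ne_zero.2 h.ne'), mul_zero]

theorem exists_finset_zeros_deriv_of_finset_zeros {f f' : ℝ → ℝ} {a b : ℝ}
    (hf : ContinuousOn f (Set.Icc a b)) (hff' : ∀ x ∈ Set.Ioo a b, HasDerivAt f (f' x) x)
    {s : Finset ℝ} (hs : ↑s ⊆ Set.Icc a b) (hs0 : ∀ x ∈ s, f x = 0) :
    ∃ t : Finset ℝ, ↑t ⊆ Set.Ioo a b ∧ (∀ x ∈ t, f' x = 0) ∧ s.card ≤ t.card + 1 := by
  by_cases hZ : {x ∈ Set.Ioo a b | f' x = 0}.Finite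
  · refine ⟨hZ.toFinset, fun x hx => (hZ.mem_toFinset.1 hx).1,
      fun x hx => (hZ.mem_toFinset.1 hx).2, card_le_of_interleaved fun x hx y hy hxy _ => ?_⟩
    obtain ⟨hax, -⟩ := hs hx
    obtain ⟨-, hyb⟩ := hs hy
    have hsub : Set.Ioo x y ⊆ Set.Ioo a b := Set.Ioo_subset_Ioo hax hyb
    obtain ⟨z, hz, hz0⟩ := exists_hasDerivAt_eq_zero hxy
      (hf.mono (Set.Icc_subset_Icc hax hyb)) ((hs0 x hx).trans (hs0 y hy).symm)
      fun z hz => hff' z (hsub hz)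
    exact ⟨z, hZ.mem_toFinset.2 ⟨hsub hz, hz0⟩, hz⟩
  · obtain ⟨t, ht, htcard⟩ := Set.Infinite.exists_subset_card_eq hZ s.card
    exact ⟨t, fun x hx => (ht hx).1, fun x hx => (ht hx).2, by omega⟩

theorem Polynomial.roots_eq_val_of_natDegree_le_card {R : Type*} [CommRing R] [IsDomain R]
    {p : R[X]} (hp : p ≠ 0) {s : Finset R} (hs : ∀ x ∈ s, p.IsRoot x)
    (hcard : p.natDegree ≤ s.card) : p.roots = s.val := by
  refine (Multiset.eq_of_le_of_card_le ?_ ((card_roots' p).trans hcard)).symm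
  exact (Multiset.le_iff_subset s.nodup).2 fun x hx => (mem_roots hp).2 (hs x hx)

theorem Polynomial.eval_derivative_ne_zero_of_nodup_roots {R : Type*} [CommRing R] [IsDomain R]
    {p : R[X]} (hp : p ≠ 0) (hnd : p.roots.Nodup) {x : R} (hx : p.IsRoot x) :
    p.derivative.eval x ≠ 0 := fun hx' => by
  classical
  have h := (one_lt_rootMultiplicity_iff_isRoot hp).2 ⟨hx, hx'⟩
  rw [← count_roots, Multiset.count_eq_one_of_mem hnd ((mem_roots hp).2 hx)] at h
  exact lt_irrefl 1 h

/-- The `j`-th derivative of `(1 - x)^(n+a) (1 + x)^(n+b)` on `(-1, 1)`, expanded by the Leibniz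
rule. -/
noncomputable def jacobiWeightDeriv (a b : ℝ) (n j : ℕ) : ℝ → ℝ :=
  leibnizSum (fun i x => (-1) ^ i * rpowIterDeriv (n + a) i (1 - x))
    (fun k x => rpowIterDeriv (n + b) k (1 + x)) j

section JacobiWeight

variable {a b : ℝ} {n j : ℕ}

theorem hasDerivAt_jacobiWeightDeriv {x : ℝ} (hx : x ∈ Set.Ioo (-1 : ℝ) 1) :
    HasDerivAt (jacobiWeightDeriv a b n j) (jacobiWeightDeriv a b n (j + 1) x) x := by
  refine hasDerivAt_leibnizSum (fun i => ?_) (fun k => ?_) j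
  · have h := ((hasDerivAt_rpowIterDeriv (n + a) i (sub_ne_zero.2 hx.2.ne')).comp x
      ((hasDerivAt_id x).const_sub 1)).const_mul ((-1 : ℝ) ^ i)
    exact h.congr_deriv (by ring)
  · have hx' : 1 + x ≠ 0 := by linarith [hx.1]
    exact (((hasDerivAt_rpowIterDeriv (n + b) k hx').comp x
      ((hasDerivAt_id x).const_add 1))).congr_deriv (mul_one _)

private theorem natCast_lt_add_of_lt {m : ℕ} {c : ℝ} (hc : -1 < c) (hm : m < n) :
    (m : ℝ) < n + c := by
  have : (m : ℝ) + 1 ≤ n := by exact_mod_cast hm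
  linarith

theorem continuous_jacobiWeightDeriv (ha : -1 < a) (hb : -1 < b) (hj : j < n) :
    Continuous (jacobiWeightDeriv a b n j) := by
  unfold jacobiWeightDeriv leibnizSum
  refine continuous_finsetSum _ fun i hi => ?_
  have hi : i < n := (Nat.lt_succ_iff.1 (mem_range.1 hi)).trans_lt hj
  have hu := (continuous_rpowIterDeriv (natCast_lt_add_of_lt ha hi).le).comp
    (continuous_sub_left (1 : ℝ))
  have hv := (continuous_rpowIterDeriv (natCast_lt_add_of_lt hb ((j.sub_le i).trans_lt hj)).le).comp
    (continuous_const_add (1 : ℝ))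
  exact (continuous_const.mul (continuous_const.mul hu)).mul hv

theorem jacobiWeightDeriv_one (ha : -1 < a) (hj : j < n) : jacobiWeightDeriv a b n j 1 = 0 := by
  unfold jacobiWeightDeriv leibnizSum
  refine sum_eq_zero fun i hi => ?_
  have hi : i < n := (Nat.lt_succ_iff.1 (mem_range.1 hi)).trans_lt hj
  simp only [sub_self, rpowIterDeriv_zero (natCast_lt_add_of_lt ha hi), mul_zero, zero_mul]

theorem jacobiWeightDeriv_neg_one (hb : -1 < b) (hj : j < n) :
    jacobiWeightDeriv a b n j (-1) = 0 := by
  unfold jacobiWeightDeriv leibnizSum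
  refine sum_eq_zero fun i _ => ?_
  have hi : j - i < n := (j.sub_le i).trans_lt hj
  simp only [add_neg_cancel, rpowIterDeriv_zero (natCast_lt_add_of_lt hb hi), mul_zero]

theorem jacobiPNat_eq_sum (ha : -1 < a) (hb : -1 < b) {x : ℝ} :
    jacobiPNat n a b x = (2 ^ n * n.factorial : ℝ)⁻¹ * ∑ k ∈ range (n + 1),
      n.choose k * (descPochhammer ℝ (n - k)).eval (n + a) * (descPochhammer ℝ k).eval (n + b) *
        (x - 1) ^ k * (x + 1) ^ (n - k) := by
  rw [jacobiPNat, mul_sum, mul_sum]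
  refine sum_congr rfl fun k hk => ?_
  have hk : k ≤ n := Nat.lt_succ_iff.1 (mem_range.1 hk)
  have hcast : ((n - k : ℕ) : ℝ) = n - k := Nat.cast_sub hk
  have hk' : (k : ℝ) ≤ n := by exact_mod_cast hk
  rw [Real.Gamma_add_one_eq_descPochhammer_eval_mul (s := n + a) (i := n - k)
      (by rw [hcast]; linarith),
    Real.Gamma_add_one_eq_descPochhammer_eval_mul (s := n + b) (i := k) (by linarith),
    show (n : ℝ) + a + 1 - ((n - k : ℕ) : ℝ) = k + a + 1 by rw [hcast]; ring,
    show (n : ℝ) + b + 1 - k = ((n - k : ℕ) : ℝ) + b + 1 by rw [hcast]; ring,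
    Nat.cast_choose ℝ hk]
  have h1 : Gamma (k + a + 1) ≠ 0 :=
    (Real.Gamma_pos_of_pos (by linarith [k.cast_nonneg (α := ℝ)])).ne'
  have h2 : Gamma ((n - k : ℕ) + b + 1) ≠ 0 :=
    (Real.Gamma_pos_of_pos (by linarith [(n - k).cast_nonneg (α := ℝ)])).ne'
  field_simp

theorem jacobiWeightDeriv_self_eq (ha : -1 < a) (hb : -1 < b) {x : ℝ}
    (hx : x ∈ Set.Ioo (-1 : ℝ) 1) :
    jacobiWeightDeriv a b n n x =
      (-1) ^ n * 2 ^ n * n.factorial * ((1 - x) ^ a * (1 + x) ^ b * jacobiPNat n a b x) := by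
  have h1 : 1 - x ≠ 0 := by linarith [hx.2]
  have h2 : 1 + x ≠ 0 := by linarith [hx.1]
  have hfac : (2 ^ n * n.factorial : ℝ) ≠ 0 := by positivity
  rw [jacobiPNat_eq_sum ha hb, jacobiWeightDeriv, leibnizSum]
  simp only [mul_sum]
  refine (sum_flip _).symm.trans (sum_congr rfl fun i hi => ?_)
  have hi : i ≤ n := Nat.lt_succ_iff.1 (mem_range.1 hi)
  have hsign : (-1 : ℝ) ^ n * (x - 1) ^ i = (-1) ^ (n - i) * (1 - x) ^ i := by
    rw [← Nat.sub_add_cancel hi, pow_add, Nat.add_sub_cancel, mul_assoc, ← mul_pow]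
    ring_nf
  have hcast : ((n - i : ℕ) : ℝ) = n - i := Nat.cast_sub hi
  simp only [Nat.sub_sub_self hi, Nat.choose_symm hi, rpowIterDeriv]
  rw [show (n : ℝ) + a - ((n - i : ℕ) : ℝ) = a + i by rw [hcast]; ring,
    show (n : ℝ) + b - i = b + ((n - i : ℕ) : ℝ) by rw [hcast]; ring,
    Real.rpow_add_natCast h1, Real.rpow_add_natCast h2, add_comm x 1]
  field_simp
  linear_combination -(n.choose i : ℝ) * (descPochhammer ℝ (n - i)).eval (n + a) *
    (descPochhammer ℝ i).eval (n + b) * (1 - x) ^ a * (1 + x) ^ b * hsign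

theorem exists_finset_zeros_jacobiWeightDeriv (ha : -1 < a) (hb : -1 < b) (hj : j ≤ n) :
    ∃ s : Finset ℝ, ↑s ⊆ Set.Ioo (-1 : ℝ) 1 ∧
      (∀ x ∈ s, jacobiWeightDeriv a b n j x = 0) ∧ j ≤ s.card := by
  induction j with
  | zero => exact ⟨∅, by simp, by simp, le_rfl⟩
  | succ j ih =>
    have hj : j < n := hj
    obtain ⟨s, hs, hs0, hcard⟩ := ih hj.le
    have hm1 : (-1 : ℝ) ∉ insert 1 s := by
      simp only [mem_insert, not_or]
      exact ⟨by norm_num, fun h => (hs h).1.false⟩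
    have h1 : (1 : ℝ) ∉ s := fun h => (hs h).2.false
    obtain ⟨t, ht, ht0, htcard⟩ := exists_finset_zeros_deriv_of_finset_zeros
      (continuous_jacobiWeightDeriv ha hb hj).continuousOn
      (fun x hx => hasDerivAt_jacobiWeightDeriv hx) (s := insert (-1) (insert 1 s))
      (by
        simp only [coe_insert, Set.insert_subset_iff]
        exact ⟨by norm_num, by norm_num, hs.trans Set.Ioo_subset_Icc_self⟩)
      (by
        simp only [mem_insert, forall_eq_or_imp]
        exact ⟨jacobiWeightDeriv_neg_one hb hj, jacobiWeightDeriv_one ha hj, hs0⟩)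
    rw [card_insert_of_notMem hm1, card_insert_of_notMem h1] at htcard
    exact ⟨t, ht, ht0, by omega⟩

end JacobiWeight

theorem exists_finset_zeros_jacobiPNat {a b : ℝ} (ha : -1 < a) (hb : -1 < b) (n : ℕ) :
    ∃ s : Finset ℝ, ↑s ⊆ Set.Ioo (-1 : ℝ) 1 ∧ (∀ x ∈ s, jacobiPNat n a b x = 0) ∧
      n ≤ s.card := by
  obtain ⟨s, hs, hs0, hcard⟩ := exists_finset_zeros_jacobiWeightDeriv ha hb (le_refl n)
  refine ⟨s, hs, fun x hx => ?_, hcard⟩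
  have hw : 0 < (1 - x) ^ a * (1 + x) ^ b := by
    have := hs hx
    exact mul_pos (Real.rpow_pos_of_pos (by linarith [this.2]) a)
      (Real.rpow_pos_of_pos (by linarith [this.1]) b)
  have h := hs0 x hx
  rw [jacobiWeightDeriv_self_eq ha hb (hs hx)] at h
  simpa [hw.ne', Nat.factorial_ne_zero] using h

noncomputable def jacobiPoly (n : ℕ) (a b : ℝ) : ℝ[X] :=
  C (1 / 2 ^ n) * ∑ k ∈ range (n + 1),
    C (Gamma ((n : ℝ) + a + 1) / (Gamma ((k : ℝ) + a + 1) * ((n - k).factorial : ℝ)) *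
      (Gamma ((n : ℝ) + b + 1) / (Gamma (((n - k : ℕ) : ℝ) + b + 1) * (k.factorial : ℝ)))) *
    (X - 1) ^ k * (X + 1) ^ (n - k)

theorem eval_jacobiPoly (n : ℕ) (a b x : ℝ) : (jacobiPoly n a b).eval x = jacobiPNat n a b x := by
  simp [jacobiPoly, jacobiPNat, eval_finsetSum, mul_assoc]

theorem natDegree_jacobiPoly_le (n : ℕ) (a b : ℝ) : (jacobiPoly n a b).natDegree ≤ n := by
  refine (natDegree_C_mul_le _ _).trans (natDegree_sum_le_of_forall_le _ _ fun k hk => ?_)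
  have hk : k ≤ n := Nat.lt_succ_iff.1 (mem_range.1 hk)
  compute_degree
  omega

theorem jacobiPNat_one_pos {a b : ℝ} (ha : -1 < a) (hb : -1 < b) (n : ℕ) :
    0 < jacobiPNat n a b 1 := by
  rw [jacobiPNat, sum_eq_single 0 (fun k _ hk => by simp [hk]) (by simp)]
  have hn := n.cast_nonneg (α := ℝ)
  have ga := Real.Gamma_pos_of_pos (show 0 < (n : ℝ) + a + 1 by linarith)
  have ga0 := Real.Gamma_pos_of_pos (show 0 < ((0 : ℕ) : ℝ) + a + 1 by simp; linarith)
  have gb := Real.Gamma_pos_of_pos (show 0 < ((n - 0 : ℕ) : ℝ) + b + 1 by simp; linarith)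
  positivity

theorem jacobi_roots_simple_in_Ioo_general (a b : ℝ) (ha : -1 < a) (hb : -1 < b) (n : ℕ) :
    ∃ ξ : Fin n → ℝ, Function.Injective ξ ∧
      (∀ i, ξ i ∈ Set.Ioo (-1 : ℝ) 1 ∧ jacobiPNat n a b (ξ i) = 0 ∧
        deriv (fun τ => jacobiPNat n a b τ) (ξ i) ≠ 0) ∧
      (∀ x : ℝ, jacobiPNat n a b x = 0 → ∃ i, x = ξ i) := by
  obtain ⟨s, hs, hs0, hcard⟩ := exists_finset_zeros_jacobiPNat ha hb n
  have hroot : ∀ x, (jacobiPoly n a b).IsRoot x ↔ jacobiPNat n a b x = 0 := fun x => by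
    rw [IsRoot, eval_jacobiPoly]
  have hp : jacobiPoly n a b ≠ 0 := fun h =>
    (jacobiPNat_one_pos ha hb n).ne' (by rw [← eval_jacobiPoly, h, eval_zero])
  have hroots : (jacobiPoly n a b).roots = s.val := roots_eq_val_of_natDegree_le_card hp
    (fun x hx => (hroot x).2 (hs0 x hx)) ((natDegree_jacobiPoly_le n a b).trans hcard)
  have hsn : s.card = n := le_antisymm (by
    simpa [hroots] using (card_roots' _).trans (natDegree_jacobiPoly_le n a b)) hcard
  refine ⟨s.orderEmbOfFin hsn, (s.orderEmbOfFin hsn).injective, fun i => ?_, fun x hx => ?_⟩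
  · have hi := s.orderEmbOfFin_mem hsn i
    refine ⟨hs hi, hs0 _ hi, ?_⟩
    simp_rw [← eval_jacobiPoly, Polynomial.deriv]
    exact eval_derivative_ne_zero_of_nodup_roots hp (hroots ▸ s.nodup) ((hroot _).2 (hs0 _ hi))
  · have hx : x ∈ Set.range (s.orderEmbOfFin hsn) := by
      rw [range_orderEmbOfFin, mem_coe, ← mem_val, ← hroots, mem_roots hp, hroot]
      exact hx
    obtain ⟨i, hi⟩ := hx
    exact ⟨i, hi.symm⟩

/-- for `a, b > −1` and `n ≥ 1`, the Jacobi polynomial `P_n^{(a,b)}`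
has exactly `n` real roots, all simple and lying in `(−1,1)`. -/
theorem jacobi_roots_simple_in_Ioo (a b : ℝ) (ha : -1 < a) (hb : -1 < b) (n : ℕ) (hn : 1 ≤ n) :
    ∃ ξ : Fin n → ℝ, Function.Injective ξ ∧
      (∀ i, ξ i ∈ Set.Ioo (-1 : ℝ) 1 ∧ jacobiPNat n a b (ξ i) = 0 ∧
        deriv (fun τ => jacobiPNat n a b τ) (ξ i) ≠ 0) ∧
      (∀ x : ℝ, jacobiPNat n a b x = 0 → ∃ i, x = ξ i) :=
  jacobi_roots_simple_in_Ioo_general a b ha hb n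
end
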